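/- arXiv:2009.04832 — 9 statements merged into one kernel-verified Lean document; each statement's English description precedes it below -/
import Mathlib

section
/- Under mandatory reporting and mutual independence of D, (M(0),M(1)), and the Y potential outcomes, the pure indirect effect PIE = E[Y(1,M(1))] − E[Y(1,M(0))] equals β_M · E[Y(1,1)], where β_M = E[M(1)−M(0)]. -/
open MeasureTheory ProbabilityTheory

/-! Under mandatory reporting `Y(1,0) = 0`, so `Y(1, M(d))` reduces to `M(d) · Y(1,1)`; since the
mediator is independent of the outcomes, its expectation factors as `E[M(d)] · E[Y(1,1)]`. -/

lemma integral_mixture_eq_mul_integral {Ω : Type*} [MeasurableSpace Ω] {μ : Measure Ω}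
    {m y₀ y₁ : Ω → ℝ} (hy₀ : y₀ =ᵐ[μ] 0) (hmy₁ : IndepFun m y₁ μ)
    (hm : AEStronglyMeasurable m μ) (hy₁ : AEStronglyMeasurable y₁ μ) :
    ∫ ω, (1 - m ω) * y₀ ω + m ω * y₁ ω ∂μ = (∫ ω, m ω ∂μ) * ∫ ω, y₁ ω ∂μ :=
  calc ∫ ω, (1 - m ω) * y₀ ω + m ω * y₁ ω ∂μ = ∫ ω, m ω * y₁ ω ∂μ := by
        refine integral_congr_ae ?_
        filter_upwards [hy₀] with ω hω
        simp [hω]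
    _ = (∫ ω, m ω ∂μ) * ∫ ω, y₁ ω ∂μ := hmy₁.integral_fun_mul_eq_mul_integral hm hy₁

theorem stmt1_general {Ω : Type*} [MeasurableSpace Ω] (μ : Measure Ω)
    (D : Ω → ℝ) (M : Fin 2 → Ω → ℝ) (Y : Fin 2 → Fin 2 → Ω → ℝ)
    (hMm : ∀ d, Measurable (M d)) (hYm : ∀ d m, Measurable (Y d m))
    (hindep2 : IndepFun (fun ω => (D ω, M 0 ω, M 1 ω))
      (fun ω => (Y 0 0 ω, Y 0 1 ω, Y 1 0 ω, Y 1 1 ω)) μ)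
    (hmand : ∀ d : Fin 2, ∀ᵐ ω ∂μ, Y d 0 ω = 0) :
    (∫ ω, ((1 - M 1 ω) * Y 1 0 ω + M 1 ω * Y 1 1 ω) ∂μ)
      - (∫ ω, ((1 - M 0 ω) * Y 1 0 ω + M 0 ω * Y 1 1 ω) ∂μ)
      = ((∫ ω, M 1 ω ∂μ) - (∫ ω, M 0 ω ∂μ)) * (∫ ω, Y 1 1 ω ∂μ) := by
  have hproj : Measurable fun q : ℝ × ℝ × ℝ × ℝ => q.2.2.2 := by fun_prop
  have hM₀ : IndepFun (M 0) (Y 1 1) μ :=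
    hindep2.comp (φ := fun p : ℝ × ℝ × ℝ => p.2.1) (by fun_prop) hproj
  have hM₁ : IndepFun (M 1) (Y 1 1) μ :=
    hindep2.comp (φ := fun p : ℝ × ℝ × ℝ => p.2.2) (by fun_prop) hproj
  have hY : AEStronglyMeasurable (Y 1 1) μ := (hYm 1 1).aestronglyMeasurable
  rw [integral_mixture_eq_mul_integral (hmand 1) hM₀ (hMm 0).aestronglyMeasurable hY,
    integral_mixture_eq_mul_integral (hmand 1) hM₁ (hMm 1).aestronglyMeasurable hY]
  ring

/-- Under mandatory reporting and mutual independence,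
PIE = E[Y(1,M(1))] − E[Y(1,M(0))] = β_M · E[Y(1,1)], where β_M = E[M(1)] − E[M(0)].
Y(d,M(d')) is written as the mixture (1−M(d'))·Y(d,0) + M(d')·Y(d,1). -/
theorem stmt1 {Ω : Type*} [MeasurableSpace Ω] (μ : Measure Ω) [IsProbabilityMeasure μ]
    (D : Ω → ℝ) (M : Fin 2 → Ω → ℝ) (Y : Fin 2 → Fin 2 → Ω → ℝ)
    (hDm : Measurable D) (hMm : ∀ d, Measurable (M d)) (hYm : ∀ d m, Measurable (Y d m))
    (hDb : ∀ ω, D ω = 0 ∨ D ω = 1)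
    (hMb : ∀ d ω, M d ω = 0 ∨ M d ω = 1)
    (hYb : ∀ d m ω, Y d m ω = 0 ∨ Y d m ω = 1)
    (hindep1 : IndepFun D (fun ω => (M 0 ω, M 1 ω)) μ)
    (hindep2 : IndepFun (fun ω => (D ω, M 0 ω, M 1 ω))
      (fun ω => (Y 0 0 ω, Y 0 1 ω, Y 1 0 ω, Y 1 1 ω)) μ)
    (hmand : ∀ d : Fin 2, ∀ᵐ ω ∂μ, Y d 0 ω = 0) :
    (∫ ω, ((1 - M 1 ω) * Y 1 0 ω + M 1 ω * Y 1 1 ω) ∂μ)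
      - (∫ ω, ((1 - M 0 ω) * Y 1 0 ω + M 0 ω * Y 1 1 ω) ∂μ)
      = ((∫ ω, M 1 ω ∂μ) - (∫ ω, M 0 ω ∂μ)) * (∫ ω, Y 1 1 ω ∂μ) :=
  stmt1_general μ D M Y hMm hYm hindep2 hmand
end

section
/- Under mandatory reporting and mutual independence of D, (M(0),M(1)), and the Y potential outcomes, the average treatment effect ATE = E[Y(1,M(1))] − E[Y(0,M(0))] equals β_M·E[Y(1,1)] + β_Y·E[M(0)]. Consequently, if β_M ≥ 0 and β_Y ≥ 0 then ATE ≥ 0, and if β_M ≤ 0 and β_Y ≤ 0 then ATE ≤ 0. -/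
open MeasureTheory ProbabilityTheory

/-! Mandatory reporting makes `Y(d,0) = 0`, so the realised outcome `Y(d, M(d))` is `M(d) · Y(d,1)`,
and independence of the mediator from the outcomes factors its mean as `E[M(d)] · E[Y(d,1)]`.
The ATE `E[M(1)] E[Y(1,1)] - E[M(0)] E[Y(0,1)]` then splits as `β_M E[Y(1,1)] + β_Y E[M(0)]`, whose
coefficients `E[Y(1,1)]` and `E[M(0)]` are nonnegative because the variables are binary. -/

lemma integral_one_sub_mul_add_mul_eq_mul_integral {Ω : Type*} [MeasurableSpace Ω]
    {μ : Measure Ω} {M Y₀ Y₁ : Ω → ℝ} (hY₀ : ∀ᵐ ω ∂μ, Y₀ ω = 0) (hMY₁ : IndepFun M Y₁ μ)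
    (hM : AEStronglyMeasurable M μ) (hY₁ : AEStronglyMeasurable Y₁ μ) :
    ∫ ω, ((1 - M ω) * Y₀ ω + M ω * Y₁ ω) ∂μ = (∫ ω, M ω ∂μ) * ∫ ω, Y₁ ω ∂μ := by
  calc ∫ ω, ((1 - M ω) * Y₀ ω + M ω * Y₁ ω) ∂μ = ∫ ω, M ω * Y₁ ω ∂μ := by
        refine integral_congr_ae ?_
        filter_upwards [hY₀] with ω hω
        simp [hω]
    _ = (∫ ω, M ω ∂μ) * ∫ ω, Y₁ ω ∂μ := hMY₁.integral_fun_mul_eq_mul_integral hM hY₁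

lemma integral_nonneg_of_forall_eq_zero_or_eq_one {Ω : Type*} [MeasurableSpace Ω]
    {μ : Measure Ω} {f : Ω → ℝ} (hf : ∀ ω, f ω = 0 ∨ f ω = 1) : 0 ≤ ∫ ω, f ω ∂μ :=
  integral_nonneg fun ω => by rcases hf ω with h | h <;> simp [h]

theorem stmt3_general {Ω : Type*} [MeasurableSpace Ω] (μ : Measure Ω)
    (D : Ω → ℝ) (M : Fin 2 → Ω → ℝ) (Y : Fin 2 → Fin 2 → Ω → ℝ)
    (hMm : ∀ d, Measurable (M d)) (hYm : ∀ d m, Measurable (Y d m))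
    (hMb : ∀ d ω, M d ω = 0 ∨ M d ω = 1)
    (hYb : ∀ d m ω, Y d m ω = 0 ∨ Y d m ω = 1)
    (hindep2 : IndepFun (fun ω => (D ω, M 0 ω, M 1 ω))
      (fun ω => (Y 0 0 ω, Y 0 1 ω, Y 1 0 ω, Y 1 1 ω)) μ)
    (hmand : ∀ d : Fin 2, ∀ᵐ ω ∂μ, Y d 0 ω = 0) :
    ((∫ ω, ((1 - M 1 ω) * Y 1 0 ω + M 1 ω * Y 1 1 ω) ∂μ)
        - (∫ ω, ((1 - M 0 ω) * Y 0 0 ω + M 0 ω * Y 0 1 ω) ∂μ)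
      = ((∫ ω, M 1 ω ∂μ) - (∫ ω, M 0 ω ∂μ)) * (∫ ω, Y 1 1 ω ∂μ)
        + ((∫ ω, Y 1 1 ω ∂μ) - (∫ ω, Y 0 1 ω ∂μ)) * (∫ ω, M 0 ω ∂μ))
    ∧ (0 ≤ (∫ ω, M 1 ω ∂μ) - (∫ ω, M 0 ω ∂μ) →
        0 ≤ (∫ ω, Y 1 1 ω ∂μ) - (∫ ω, Y 0 1 ω ∂μ) →
        0 ≤ (∫ ω, ((1 - M 1 ω) * Y 1 0 ω + M 1 ω * Y 1 1 ω) ∂μ)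
              - (∫ ω, ((1 - M 0 ω) * Y 0 0 ω + M 0 ω * Y 0 1 ω) ∂μ))
    ∧ ((∫ ω, M 1 ω ∂μ) - (∫ ω, M 0 ω ∂μ) ≤ 0 →
        (∫ ω, Y 1 1 ω ∂μ) - (∫ ω, Y 0 1 ω ∂μ) ≤ 0 →
        (∫ ω, ((1 - M 1 ω) * Y 1 0 ω + M 1 ω * Y 1 1 ω) ∂μ)
              - (∫ ω, ((1 - M 0 ω) * Y 0 0 ω + M 0 ω * Y 0 1 ω) ∂μ) ≤ 0) := by
  have hMY₀ : IndepFun (M 0) (Y 0 1) μ :=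
    hindep2.comp (φ := fun p : ℝ × ℝ × ℝ => p.2.1) (ψ := fun q : ℝ × ℝ × ℝ × ℝ => q.2.1)
      (by fun_prop) (by fun_prop)
  have hMY₁ : IndepFun (M 1) (Y 1 1) μ :=
    hindep2.comp (φ := fun p : ℝ × ℝ × ℝ => p.2.2) (ψ := fun q : ℝ × ℝ × ℝ × ℝ => q.2.2.2)
      (by fun_prop) (by fun_prop)
  have hATE : (∫ ω, ((1 - M 1 ω) * Y 1 0 ω + M 1 ω * Y 1 1 ω) ∂μ)
        - (∫ ω, ((1 - M 0 ω) * Y 0 0 ω + M 0 ω * Y 0 1 ω) ∂μ)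
      = ((∫ ω, M 1 ω ∂μ) - (∫ ω, M 0 ω ∂μ)) * (∫ ω, Y 1 1 ω ∂μ)
        + ((∫ ω, Y 1 1 ω ∂μ) - (∫ ω, Y 0 1 ω ∂μ)) * (∫ ω, M 0 ω ∂μ) := by
    rw [integral_one_sub_mul_add_mul_eq_mul_integral (hmand 1) hMY₁
        (hMm 1).aestronglyMeasurable (hYm 1 1).aestronglyMeasurable,
      integral_one_sub_mul_add_mul_eq_mul_integral (hmand 0) hMY₀
        (hMm 0).aestronglyMeasurable (hYm 0 1).aestronglyMeasurable]
    ring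
  have hM₀ : 0 ≤ ∫ ω, M 0 ω ∂μ := integral_nonneg_of_forall_eq_zero_or_eq_one (hMb 0)
  have hY₁₁ : 0 ≤ ∫ ω, Y 1 1 ω ∂μ := integral_nonneg_of_forall_eq_zero_or_eq_one (hYb 1 1)
  refine ⟨hATE, fun hβM hβY => ?_, fun hβM hβY => ?_⟩ <;> rw [hATE]
  · positivity
  · linarith [mul_nonpos_of_nonpos_of_nonneg hβM hY₁₁, mul_nonpos_of_nonpos_of_nonneg hβY hM₀]

/-- Under mandatory reporting and mutual independence,
ATE = E[Y(1,M(1))] − E[Y(0,M(0))] = β_M·E[Y(1,1)] + β_Y·E[M(0)];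
consequently β_M ≥ 0, β_Y ≥ 0 imply ATE ≥ 0, and β_M ≤ 0, β_Y ≤ 0 imply ATE ≤ 0. -/
theorem stmt3 {Ω : Type*} [MeasurableSpace Ω] (μ : Measure Ω) [IsProbabilityMeasure μ]
    (D : Ω → ℝ) (M : Fin 2 → Ω → ℝ) (Y : Fin 2 → Fin 2 → Ω → ℝ)
    (hDm : Measurable D) (hMm : ∀ d, Measurable (M d)) (hYm : ∀ d m, Measurable (Y d m))
    (hDb : ∀ ω, D ω = 0 ∨ D ω = 1)
    (hMb : ∀ d ω, M d ω = 0 ∨ M d ω = 1)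
    (hYb : ∀ d m ω, Y d m ω = 0 ∨ Y d m ω = 1)
    (hindep1 : IndepFun D (fun ω => (M 0 ω, M 1 ω)) μ)
    (hindep2 : IndepFun (fun ω => (D ω, M 0 ω, M 1 ω))
      (fun ω => (Y 0 0 ω, Y 0 1 ω, Y 1 0 ω, Y 1 1 ω)) μ)
    (hmand : ∀ d : Fin 2, ∀ᵐ ω ∂μ, Y d 0 ω = 0) :
    ((∫ ω, ((1 - M 1 ω) * Y 1 0 ω + M 1 ω * Y 1 1 ω) ∂μ)
        - (∫ ω, ((1 - M 0 ω) * Y 0 0 ω + M 0 ω * Y 0 1 ω) ∂μ)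
      = ((∫ ω, M 1 ω ∂μ) - (∫ ω, M 0 ω ∂μ)) * (∫ ω, Y 1 1 ω ∂μ)
        + ((∫ ω, Y 1 1 ω ∂μ) - (∫ ω, Y 0 1 ω ∂μ)) * (∫ ω, M 0 ω ∂μ))
    ∧ (0 ≤ (∫ ω, M 1 ω ∂μ) - (∫ ω, M 0 ω ∂μ) →
        0 ≤ (∫ ω, Y 1 1 ω ∂μ) - (∫ ω, Y 0 1 ω ∂μ) →
        0 ≤ (∫ ω, ((1 - M 1 ω) * Y 1 0 ω + M 1 ω * Y 1 1 ω) ∂μ)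
              - (∫ ω, ((1 - M 0 ω) * Y 0 0 ω + M 0 ω * Y 0 1 ω) ∂μ))
    ∧ ((∫ ω, M 1 ω ∂μ) - (∫ ω, M 0 ω ∂μ) ≤ 0 →
        (∫ ω, Y 1 1 ω ∂μ) - (∫ ω, Y 0 1 ω ∂μ) ≤ 0 →
        (∫ ω, ((1 - M 1 ω) * Y 1 0 ω + M 1 ω * Y 1 1 ω) ∂μ)
              - (∫ ω, ((1 - M 0 ω) * Y 0 0 ω + M 0 ω * Y 0 1 ω) ∂μ) ≤ 0) :=
  stmt3_general μ D M Y hMm hYm hMb hYb hindep2 hmand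
end

section
/- Under mandatory reporting and mutual independence of D, (M(0),M(1)), and the Y potential outcomes, the vector of principal-stratum effects (E[Y(1)−Y(0) | S=al], E[Y(1)−Y(0) | S=mi], E[Y(1)−Y(0) | S=ma], E[Y(1)−Y(0) | S=ne]) equals (β_Y, β_Y + E[Y(0,1)], −E[Y(0,1)], 0), where Y(d)=Y(d,M(d)), for all strata with positive probability. -/
open MeasureTheory ProbabilityTheory

/-! Under mandatory reporting `Y(d,0) = 0`, on the stratum `{M(0) = a, M(1) = b}` the effect
`Y(1) - Y(0)` equals `b * Y(1,1) - a * Y(0,1)`, a function of the outcomes alone. As the stratum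
is an event of `(M(0), M(1))`, which is independent of the outcomes, the average effect over it is
`b * E[Y(1,1)] - a * E[Y(0,1)]`; the four strata are `(a, b) ∈ {0,1}²`. -/

theorem ProbabilityTheory.IndepFun.setIntegral_preimage_eq_measureReal_mul_integral
    {Ω α : Type*} {_ : MeasurableSpace Ω} [MeasurableSpace α] {μ : Measure Ω}
    {X : Ω → α} {Z : Ω → ℝ} (hXZ : IndepFun X Z μ) (hX : Measurable X)
    (hZ : AEStronglyMeasurable Z μ) {s : Set α} (hs : MeasurableSet s) :
    ∫ ω in X ⁻¹' s, Z ω ∂μ = μ.real (X ⁻¹' s) * ∫ ω, Z ω ∂μ := by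
  set φ : α → ℝ := s.indicator fun _ => 1
  have hφ : Measurable φ := measurable_const.indicator hs
  have hind : (X ⁻¹' s).indicator Z = fun ω => φ (X ω) * Z ω := by
    ext ω
    by_cases h : X ω ∈ s <;> simp [φ, Set.indicator, h]
  calc ∫ ω in X ⁻¹' s, Z ω ∂μ
      = ∫ ω, φ (X ω) * Z ω ∂μ := by rw [← integral_indicator (hX hs), hind]
    _ = (∫ ω, φ (X ω) ∂μ) * ∫ ω, Z ω ∂μ :=
      (hXZ.comp hφ measurable_id).integral_fun_mul_eq_mul_integral
        (hφ.comp hX).aestronglyMeasurable hZ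
    _ = μ.real (X ⁻¹' s) * ∫ ω, Z ω ∂μ := by
      rw [← integral_indicator_one (hX hs)]
      rfl

theorem MeasureTheory.integrable_of_forall_eq_zero_or_eq_one {Ω : Type*}
    {_ : MeasurableSpace Ω} {μ : Measure Ω} [IsFiniteMeasure μ] {f : Ω → ℝ}
    (hf : AEStronglyMeasurable f μ) (hf01 : ∀ ω, f ω = 0 ∨ f ω = 1) : Integrable f μ :=
  .of_bound hf 1 (.of_forall fun ω => by rcases hf01 ω with h | h <;> simp [h])

section PrincipalStrata

variable {Ω : Type*} [MeasurableSpace Ω] {μ : Measure Ω}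
  {M : Fin 2 → Ω → ℝ} {Y : Fin 2 → Fin 2 → Ω → ℝ}

theorem integral_effect_eq_of_mandatory (h11 : Integrable (Y 1 1) μ)
    (h01 : Integrable (Y 0 1) μ) (hmand : ∀ d : Fin 2, ∀ᵐ ω ∂μ, Y d 0 ω = 0) (a b : ℝ) :
    ∫ ω, (((1 - b) * Y 1 0 ω + b * Y 1 1 ω) - ((1 - a) * Y 0 0 ω + a * Y 0 1 ω)) ∂μ
      = b * (∫ ω, Y 1 1 ω ∂μ) - a * ∫ ω, Y 0 1 ω ∂μ := by
  rw [← integral_const_mul, ← integral_const_mul,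
    ← integral_sub (h11.const_mul b) (h01.const_mul a)]
  refine integral_congr_ae ?_
  filter_upwards [hmand 0, hmand 1] with ω h0 h1
  rw [h0, h1]
  ring

theorem setAverage_effect_stratum_eq_of_mandatory (hMm : ∀ d, Measurable (M d))
    (hint : ∀ d m, Integrable (Y d m) μ)
    (hindep : IndepFun (fun ω => (M 0 ω, M 1 ω))
      (fun ω => (Y 0 0 ω, Y 0 1 ω, Y 1 0 ω, Y 1 1 ω)) μ)
    (hmand : ∀ d : Fin 2, ∀ᵐ ω ∂μ, Y d 0 ω = 0) (a b : ℝ)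
    (hpos : 0 < (μ {ω | M 0 ω = a ∧ M 1 ω = b}).toReal) :
    (∫ ω in {ω | M 0 ω = a ∧ M 1 ω = b},
        (((1 - M 1 ω) * Y 1 0 ω + M 1 ω * Y 1 1 ω)
          - ((1 - M 0 ω) * Y 0 0 ω + M 0 ω * Y 0 1 ω)) ∂μ)
      / (μ {ω | M 0 ω = a ∧ M 1 ω = b}).toReal
      = b * (∫ ω, Y 1 1 ω ∂μ) - a * ∫ ω, Y 0 1 ω ∂μ := by
  set effect : ℝ × ℝ × ℝ × ℝ → ℝ :=
    fun y => ((1 - b) * y.2.2.1 + b * y.2.2.2) - ((1 - a) * y.1 + a * y.2.1)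
  have heffect : Measurable effect := by unfold effect; fun_prop
  have hM : Measurable fun ω => (M 0 ω, M 1 ω) := (hMm 0).prodMk (hMm 1)
  have hMY : IndepFun (fun ω => (M 0 ω, M 1 ω))
      (fun ω => effect (Y 0 0 ω, Y 0 1 ω, Y 1 0 ω, Y 1 1 ω)) μ :=
    hindep.comp measurable_id heffect
  have hs : MeasurableSet {p : ℝ × ℝ | p.1 = a ∧ p.2 = b} :=
    (measurableSet_singleton a).preimage measurable_fst |>.inter
      ((measurableSet_singleton b).preimage measurable_snd)
  change (∫ ω in (fun ω => (M 0 ω, M 1 ω)) ⁻¹' {p : ℝ × ℝ | p.1 = a ∧ p.2 = b}, _ ∂μ)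
    / μ.real _ = _
  rw [setIntegral_congr_fun (hM hs)
      (g := fun ω => effect (Y 0 0 ω, Y 0 1 ω, Y 1 0 ω, Y 1 1 ω))
      (fun ω (hω : M 0 ω = a ∧ M 1 ω = b) => by rw [hω.1, hω.2]),
    hMY.setIntegral_preimage_eq_measureReal_mul_integral hM (by fun_prop) hs]
  exact (mul_div_cancel_left₀ _ hpos.ne').trans
    (integral_effect_eq_of_mandatory (hint 1 1) (hint 0 1) hmand a b)

end PrincipalStrata

theorem stmt7_general {Ω : Type*} [MeasurableSpace Ω] (μ : Measure Ω) [IsProbabilityMeasure μ]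
    (D : Ω → ℝ) (M : Fin 2 → Ω → ℝ) (Y : Fin 2 → Fin 2 → Ω → ℝ)
    (hMm : ∀ d, Measurable (M d)) (hYm : ∀ d m, Measurable (Y d m))
    (hYb : ∀ d m ω, Y d m ω = 0 ∨ Y d m ω = 1)
    (hindep2 : IndepFun (fun ω => (D ω, M 0 ω, M 1 ω))
      (fun ω => (Y 0 0 ω, Y 0 1 ω, Y 1 0 ω, Y 1 1 ω)) μ)
    (hmand : ∀ d : Fin 2, ∀ᵐ ω ∂μ, Y d 0 ω = 0) :
    (0 < (μ {ω | M 0 ω = 1 ∧ M 1 ω = 1}).toReal →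
      (∫ ω in {ω | M 0 ω = 1 ∧ M 1 ω = 1},
          (((1 - M 1 ω) * Y 1 0 ω + M 1 ω * Y 1 1 ω)
            - ((1 - M 0 ω) * Y 0 0 ω + M 0 ω * Y 0 1 ω)) ∂μ)
        / (μ {ω | M 0 ω = 1 ∧ M 1 ω = 1}).toReal
      = (∫ ω, Y 1 1 ω ∂μ) - (∫ ω, Y 0 1 ω ∂μ))
    ∧ (0 < (μ {ω | M 0 ω = 0 ∧ M 1 ω = 1}).toReal →
      (∫ ω in {ω | M 0 ω = 0 ∧ M 1 ω = 1},
          (((1 - M 1 ω) * Y 1 0 ω + M 1 ω * Y 1 1 ω)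
            - ((1 - M 0 ω) * Y 0 0 ω + M 0 ω * Y 0 1 ω)) ∂μ)
        / (μ {ω | M 0 ω = 0 ∧ M 1 ω = 1}).toReal
      = ((∫ ω, Y 1 1 ω ∂μ) - (∫ ω, Y 0 1 ω ∂μ)) + (∫ ω, Y 0 1 ω ∂μ))
    ∧ (0 < (μ {ω | M 0 ω = 1 ∧ M 1 ω = 0}).toReal →
      (∫ ω in {ω | M 0 ω = 1 ∧ M 1 ω = 0},
          (((1 - M 1 ω) * Y 1 0 ω + M 1 ω * Y 1 1 ω)
            - ((1 - M 0 ω) * Y 0 0 ω + M 0 ω * Y 0 1 ω)) ∂μ)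
        / (μ {ω | M 0 ω = 1 ∧ M 1 ω = 0}).toReal
      = -(∫ ω, Y 0 1 ω ∂μ))
    ∧ (0 < (μ {ω | M 0 ω = 0 ∧ M 1 ω = 0}).toReal →
      (∫ ω in {ω | M 0 ω = 0 ∧ M 1 ω = 0},
          (((1 - M 1 ω) * Y 1 0 ω + M 1 ω * Y 1 1 ω)
            - ((1 - M 0 ω) * Y 0 0 ω + M 0 ω * Y 0 1 ω)) ∂μ)
        / (μ {ω | M 0 ω = 0 ∧ M 1 ω = 0}).toReal
      = 0) := by
  have h := setAverage_effect_stratum_eq_of_mandatory hMm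
    (fun d m => integrable_of_forall_eq_zero_or_eq_one (hYm d m).aestronglyMeasurable (hYb d m))
    (hindep2.comp measurable_snd measurable_id) hmand
  refine ⟨fun hpos => ?_, fun hpos => ?_, fun hpos => ?_, fun hpos => ?_⟩
  · rw [h 1 1 hpos]; ring
  · rw [h 0 1 hpos]; ring
  · rw [h 1 0 hpos]; ring
  · rw [h 0 0 hpos]; ring

/-- Under mandatory reporting and mutual independence, the
principal-stratum effects (E[Y(1)−Y(0) | S], for S = al, mi, ma, ne) equal
(β_Y, β_Y + E[Y(0,1)], −E[Y(0,1)], 0), for all strata with positive probability,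
where Y(d) = Y(d,M(d)) = (1−M(d))·Y(d,0) + M(d)·Y(d,1) and β_Y = E[Y(1,1)]−E[Y(0,1)]. -/
theorem stmt7 {Ω : Type*} [MeasurableSpace Ω] (μ : Measure Ω) [IsProbabilityMeasure μ]
    (D : Ω → ℝ) (M : Fin 2 → Ω → ℝ) (Y : Fin 2 → Fin 2 → Ω → ℝ)
    (hDm : Measurable D) (hMm : ∀ d, Measurable (M d)) (hYm : ∀ d m, Measurable (Y d m))
    (hDb : ∀ ω, D ω = 0 ∨ D ω = 1)
    (hMb : ∀ d ω, M d ω = 0 ∨ M d ω = 1)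
    (hYb : ∀ d m ω, Y d m ω = 0 ∨ Y d m ω = 1)
    (hindep1 : IndepFun D (fun ω => (M 0 ω, M 1 ω)) μ)
    (hindep2 : IndepFun (fun ω => (D ω, M 0 ω, M 1 ω))
      (fun ω => (Y 0 0 ω, Y 0 1 ω, Y 1 0 ω, Y 1 1 ω)) μ)
    (hmand : ∀ d : Fin 2, ∀ᵐ ω ∂μ, Y d 0 ω = 0) :
    (0 < (μ {ω | M 0 ω = 1 ∧ M 1 ω = 1}).toReal →
      (∫ ω in {ω | M 0 ω = 1 ∧ M 1 ω = 1},
          (((1 - M 1 ω) * Y 1 0 ω + M 1 ω * Y 1 1 ω)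
            - ((1 - M 0 ω) * Y 0 0 ω + M 0 ω * Y 0 1 ω)) ∂μ)
        / (μ {ω | M 0 ω = 1 ∧ M 1 ω = 1}).toReal
      = (∫ ω, Y 1 1 ω ∂μ) - (∫ ω, Y 0 1 ω ∂μ))
    ∧ (0 < (μ {ω | M 0 ω = 0 ∧ M 1 ω = 1}).toReal →
      (∫ ω in {ω | M 0 ω = 0 ∧ M 1 ω = 1},
          (((1 - M 1 ω) * Y 1 0 ω + M 1 ω * Y 1 1 ω)
            - ((1 - M 0 ω) * Y 0 0 ω + M 0 ω * Y 0 1 ω)) ∂μ)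
        / (μ {ω | M 0 ω = 0 ∧ M 1 ω = 1}).toReal
      = ((∫ ω, Y 1 1 ω ∂μ) - (∫ ω, Y 0 1 ω ∂μ)) + (∫ ω, Y 0 1 ω ∂μ))
    ∧ (0 < (μ {ω | M 0 ω = 1 ∧ M 1 ω = 0}).toReal →
      (∫ ω in {ω | M 0 ω = 1 ∧ M 1 ω = 0},
          (((1 - M 1 ω) * Y 1 0 ω + M 1 ω * Y 1 1 ω)
            - ((1 - M 0 ω) * Y 0 0 ω + M 0 ω * Y 0 1 ω)) ∂μ)
        / (μ {ω | M 0 ω = 1 ∧ M 1 ω = 0}).toReal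
      = -(∫ ω, Y 0 1 ω ∂μ))
    ∧ (0 < (μ {ω | M 0 ω = 0 ∧ M 1 ω = 0}).toReal →
      (∫ ω in {ω | M 0 ω = 0 ∧ M 1 ω = 0},
          (((1 - M 1 ω) * Y 1 0 ω + M 1 ω * Y 1 1 ω)
            - ((1 - M 0 ω) * Y 0 0 ω + M 0 ω * Y 0 1 ω)) ∂μ)
        / (μ {ω | M 0 ω = 0 ∧ M 1 ω = 0}).toReal
      = 0) :=
  stmt7_general μ D M Y hMm hYm hYb hindep2 hmand
end

section
/- Under mandatory reporting and mutual independence assumptions, ATE_{M=1} = E[Y(1)−Y(0) | M=1] equals (w·θ)/(w·1) where θ=(β_Y, β_Y+E[Y(0,1)], −E[Y(0,1)], 0) and w = (P(S=al), [P(S=ma)+β_M]·P(D=1), P(S=ma)·P(D=0), 0), provided P(M=1)>0. -/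
/-!
By mandatory reporting, `Y(d, 0) = 0`, so on `{M = 1}` the effect `Y(1) - Y(0)` is a.e.
`M(1) Y(1,1) - M(0) Y(0,1)`. As `(D, M(0), M(1))` is independent of the outcomes, the conditional
mean of `M(d) Y(d,1)` factors as `P(M = 1, M(d) = 1) E[Y(d,1)]`. Conditioning on `D`, which is
independent of the strata, writes `P(M = 1)` and `P(M = 1, M(d) = 1)` as `P(D = 1)`, `P(D = 0)`
mixtures of strata probabilities; with `P(D = 0) + P(D = 1) = 1` both sides of the identity then
have the same numerator and the same denominator.
-/

open MeasureTheory ProbabilityTheory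

section Binary

variable {Ω : Type*} [MeasurableSpace Ω] {μ : Measure Ω}

lemma integrable_of_eq_zero_or_one [IsFiniteMeasure μ] {f : Ω → ℝ} (hf : Measurable f)
    (hb : ∀ ω, f ω = 0 ∨ f ω = 1) : Integrable f μ :=
  .of_bound hf.aestronglyMeasurable 1 <| ae_of_all _ fun ω => by rcases hb ω with h | h <;> simp [h]

lemma mul_eq_indicator_of_eq_zero_or_one {α : Type*} {f : α → ℝ} {a : α}
    (hb : f a = 0 ∨ f a = 1) (g : α → ℝ) : f a * g a = {x | f x = 1}.indicator g a := by
  rcases hb with h | h <;> simp [h]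

lemma measureReal_eq_add_of_eq_zero_or_one [IsFiniteMeasure μ] {f : Ω → ℝ} (hf : Measurable f)
    (hb : ∀ ω, f ω = 0 ∨ f ω = 1) (s : Set Ω) :
    μ.real s = μ.real ({ω | f ω = 1} ∩ s) + μ.real ({ω | f ω = 0} ∩ s) := by
  have hdiff : s \ {ω | f ω = 1} = {ω | f ω = 0} ∩ s := by
    ext ω
    rcases hb ω with h | h <;> simp [h, and_comm]
  rw [← measureReal_inter_add_sdiff (measurableSet_eq_fun hf measurable_const), hdiff,
    Set.inter_comm]

end Binary

namespace ProbabilityTheory.IndepFun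

variable {Ω α β : Type*} [MeasurableSpace Ω] [mα : MeasurableSpace α] [mβ : MeasurableSpace β]
  {μ : Measure Ω} {X : Ω → α} {Z : Ω → β}

lemma measureReal_inter_eq_mul (h : IndepFun X Z μ) {S T : Set Ω}
    (hS : MeasurableSet[mα.comap X] S) (hT : MeasurableSet[mβ.comap Z] T) :
    μ.real (S ∩ T) = μ.real S * μ.real T := by
  simp only [measureReal_def, ← ENNReal.toReal_mul, (IndepFun_iff X Z μ).1 h S T hS hT]

lemma setIntegral_mul_eq_measureReal_inter_mul (h : IndepFun X Z μ) (hX : Measurable X)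
    (hZ : Measurable Z) {A : Set Ω} (hA : MeasurableSet[mα.comap X] A) {f : Ω → ℝ}
    (hf : Measurable[mα.comap X] f) (hfb : ∀ ω, f ω = 0 ∨ f ω = 1) {g : β → ℝ}
    (hg : Measurable g) :
    ∫ ω in A, f ω * g (Z ω) ∂μ = μ.real (A ∩ {ω | f ω = 1}) * ∫ ω, g (Z ω) ∂μ := by
  have hf₁ : MeasurableSet[mα.comap X] {ω | f ω = 1} := hf (measurableSet_singleton 1)
  calc ∫ ω in A, f ω * g (Z ω) ∂μ
      = ∫ ω in A, {ω | f ω = 1}.indicator (fun ω => g (Z ω)) ω ∂μ := by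
        congr 1 with ω
        exact mul_eq_indicator_of_eq_zero_or_one (hfb ω) fun ω => g (Z ω)
    _ = ∫ ω in A ∩ {ω | f ω = 1}, g (Z ω) ∂μ := setIntegral_indicator (hX.comap_le _ hf₁)
    _ = μ.real (A ∩ {ω | f ω = 1}) * ∫ ω, g (Z ω) ∂μ :=
      ((IndepFun_iff_Indep X Z μ).1 h).setIntegral_eq_mul hX.comap_le hZ.aemeasurable
        (hA.inter hf₁) hg.aestronglyMeasurable

end ProbabilityTheory.IndepFun

section Mediation

variable {Ω : Type*} [MeasurableSpace Ω] {μ : Measure Ω}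

lemma measureReal_realized_eq_one_inter [IsFiniteMeasure μ] {D M₀ M₁ : Ω → ℝ}
    (hD : Measurable D) (hDb : ∀ ω, D ω = 0 ∨ D ω = 1)
    (hindep : IndepFun D (fun ω => (M₀ ω, M₁ ω)) μ) {T : Set Ω}
    (hT : MeasurableSet[.comap (fun ω => (M₀ ω, M₁ ω)) inferInstance] T) :
    μ.real ({ω | D ω * M₁ ω + (1 - D ω) * M₀ ω = 1} ∩ T)
      = μ.real {ω | D ω = 1} * μ.real ({ω | M₁ ω = 1} ∩ T)
        + μ.real {ω | D ω = 0} * μ.real ({ω | M₀ ω = 1} ∩ T) := by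
  have hW := comap_measurable (m := inferInstance) fun ω => (M₀ ω, M₁ ω)
  have hD' := comap_measurable (m := inferInstance) D
  have hsplit : ∀ (d : ℝ) (i : ℝ × ℝ → ℝ), Measurable i →
      μ.real ({ω | D ω = d} ∩ ({ω | i (M₀ ω, M₁ ω) = 1} ∩ T))
        = μ.real {ω | D ω = d} * μ.real ({ω | i (M₀ ω, M₁ ω) = 1} ∩ T) := fun d i hi =>
    hindep.measureReal_inter_eq_mul (hD' (measurableSet_singleton d))
      (((hi.comp hW) (measurableSet_singleton 1)).inter hT)
  rw [measureReal_eq_add_of_eq_zero_or_one hD hDb, ← hsplit 1 Prod.snd measurable_snd,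
    ← hsplit 0 Prod.fst measurable_fst]
  congr 2 <;> ext ω <;> rcases hDb ω with h | h <;> simp [h]

lemma setIntegral_effect_realized_eq_one {D : Ω → ℝ} {M : Fin 2 → Ω → ℝ}
    {Y : Fin 2 → Fin 2 → Ω → ℝ} (hD : Measurable D) (hM : ∀ d, Measurable (M d))
    (hMb : ∀ d ω, M d ω = 0 ∨ M d ω = 1) (hY : ∀ d m, Measurable (Y d m))
    (hYi : ∀ d, Integrable (Y d 1) μ)
    (hindep : IndepFun (fun ω => (D ω, M 0 ω, M 1 ω))
      (fun ω => (Y 0 0 ω, Y 0 1 ω, Y 1 0 ω, Y 1 1 ω)) μ)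
    (hmand : ∀ d : Fin 2, ∀ᵐ ω ∂μ, Y d 0 ω = 0) :
    ∫ ω in {ω | D ω * M 1 ω + (1 - D ω) * M 0 ω = 1},
        (((1 - M 1 ω) * Y 1 0 ω + M 1 ω * Y 1 1 ω) - ((1 - M 0 ω) * Y 0 0 ω + M 0 ω * Y 0 1 ω)) ∂μ
      = μ.real ({ω | D ω * M 1 ω + (1 - D ω) * M 0 ω = 1} ∩ {ω | M 1 ω = 1})
          * (∫ ω, Y 1 1 ω ∂μ)
        - μ.real ({ω | D ω * M 1 ω + (1 - D ω) * M 0 ω = 1} ∩ {ω | M 0 ω = 1})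
          * ∫ ω, Y 0 1 ω ∂μ := by
  set A := {ω | D ω * M 1 ω + (1 - D ω) * M 0 ω = 1}
  have hXm : Measurable fun ω => (D ω, M 0 ω, M 1 ω) := hD.prodMk ((hM 0).prodMk (hM 1))
  have hZm : Measurable fun ω => (Y 0 0 ω, Y 0 1 ω, Y 1 0 ω, Y 1 1 ω) :=
    (hY 0 0).prodMk ((hY 0 1).prodMk ((hY 1 0).prodMk (hY 1 1)))
  have hX := comap_measurable (m := inferInstance) fun ω => (D ω, M 0 ω, M 1 ω)
  have hD' : Measurable[.comap _ inferInstance] D := measurable_fst.comp hX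
  have hM₀' : Measurable[.comap _ inferInstance] (M 0) :=
    (measurable_fst.comp measurable_snd).comp hX
  have hM₁' : Measurable[.comap _ inferInstance] (M 1) :=
    (measurable_snd.comp measurable_snd).comp hX
  have hA : MeasurableSet[.comap _ inferInstance] A :=
    measurableSet_eq_fun ((hD'.mul hM₁').add ((measurable_const.sub hD').mul hM₀'))
      measurable_const
  have hE₁ : ∫ ω in A, M 1 ω * Y 1 1 ω ∂μ = μ.real (A ∩ {ω | M 1 ω = 1}) * ∫ ω, Y 1 1 ω ∂μ :=
    hindep.setIntegral_mul_eq_measureReal_inter_mul hXm hZm hA hM₁' (hMb 1)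
      (g := fun z => z.2.2.2) (by fun_prop)
  have hE₀ : ∫ ω in A, M 0 ω * Y 0 1 ω ∂μ = μ.real (A ∩ {ω | M 0 ω = 1}) * ∫ ω, Y 0 1 ω ∂μ :=
    hindep.setIntegral_mul_eq_measureReal_inter_mul hXm hZm hA hM₀' (hMb 0)
      (g := fun z => z.2.1) (by fun_prop)
  have hMY : ∀ d, Integrable (fun ω => M d ω * Y d 1 ω) μ := fun d =>
    (hYi d).bdd_mul (c := 1) (hM d).aestronglyMeasurable
      (ae_of_all _ fun ω => by rcases hMb d ω with h | h <;> simp [h])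
  rw [← hE₁, ← hE₀, ← integral_sub (hMY 1).restrict (hMY 0).restrict]
  refine integral_congr_ae (ae_restrict_of_ae ?_)
  filter_upwards [hmand 0, hmand 1] with ω h₀ h₁
  rw [h₀, h₁]
  ring

end Mediation

theorem stmt8_general {Ω : Type*} [MeasurableSpace Ω] (μ : Measure Ω) [IsProbabilityMeasure μ]
    (D : Ω → ℝ) (M : Fin 2 → Ω → ℝ) (Y : Fin 2 → Fin 2 → Ω → ℝ)
    (hDm : Measurable D) (hMm : ∀ d, Measurable (M d)) (hYm : ∀ d m, Measurable (Y d m))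
    (hDb : ∀ ω, D ω = 0 ∨ D ω = 1)
    (hMb : ∀ d ω, M d ω = 0 ∨ M d ω = 1)
    (hYb : ∀ d m ω, Y d m ω = 0 ∨ Y d m ω = 1)
    (hindep1 : IndepFun D (fun ω => (M 0 ω, M 1 ω)) μ)
    (hindep2 : IndepFun (fun ω => (D ω, M 0 ω, M 1 ω))
      (fun ω => (Y 0 0 ω, Y 0 1 ω, Y 1 0 ω, Y 1 1 ω)) μ)
    (hmand : ∀ d : Fin 2, ∀ᵐ ω ∂μ, Y d 0 ω = 0) :
    (∫ ω in {ω | D ω * M 1 ω + (1 - D ω) * M 0 ω = 1},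
        (((1 - M 1 ω) * Y 1 0 ω + M 1 ω * Y 1 1 ω)
          - ((1 - M 0 ω) * Y 0 0 ω + M 0 ω * Y 0 1 ω)) ∂μ)
      / (μ {ω | D ω * M 1 ω + (1 - D ω) * M 0 ω = 1}).toReal
    = ((μ {ω | M 0 ω = 1 ∧ M 1 ω = 1}).toReal
          * ((∫ ω, Y 1 1 ω ∂μ) - (∫ ω, Y 0 1 ω ∂μ))
        + ((μ {ω | M 0 ω = 1 ∧ M 1 ω = 0}).toReal
            + ((μ {ω | M 0 ω = 0 ∧ M 1 ω = 1}).toReal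
              - (μ {ω | M 0 ω = 1 ∧ M 1 ω = 0}).toReal))
          * (μ {ω | D ω = 1}).toReal
          * (((∫ ω, Y 1 1 ω ∂μ) - (∫ ω, Y 0 1 ω ∂μ)) + (∫ ω, Y 0 1 ω ∂μ))
        + (μ {ω | M 0 ω = 1 ∧ M 1 ω = 0}).toReal * (μ {ω | D ω = 0}).toReal
          * (-(∫ ω, Y 0 1 ω ∂μ)))
      / ((μ {ω | M 0 ω = 1 ∧ M 1 ω = 1}).toReal
        + ((μ {ω | M 0 ω = 1 ∧ M 1 ω = 0}).toReal
            + ((μ {ω | M 0 ω = 0 ∧ M 1 ω = 1}).toReal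
              - (μ {ω | M 0 ω = 1 ∧ M 1 ω = 0}).toReal))
          * (μ {ω | D ω = 1}).toReal
        + (μ {ω | M 0 ω = 1 ∧ M 1 ω = 0}).toReal * (μ {ω | D ω = 0}).toReal) := by
  have hnum := setIntegral_effect_realized_eq_one hDm hMm hMb hYm
    (fun d => integrable_of_eq_zero_or_one (hYm d 1) (hYb d 1)) hindep2 hmand (μ := μ)
  have hW := comap_measurable (m := inferInstance) fun ω => (M 0 ω, M 1 ω)
  have hA₁ := measureReal_realized_eq_one_inter hDm hDb hindep1 (T := {ω | M 1 ω = 1})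
    ((measurable_snd.comp hW) (measurableSet_singleton 1))
  have hA₀ := measureReal_realized_eq_one_inter hDm hDb hindep1 (T := {ω | M 0 ω = 1})
    ((measurable_fst.comp hW) (measurableSet_singleton 1))
  have hA := measureReal_realized_eq_one_inter hDm hDb hindep1 MeasurableSet.univ
  have hM₁ := measureReal_eq_add_of_eq_zero_or_one (μ := μ) (hMm 0) (hMb 0) {ω | M 1 ω = 1}
  have hM₀ := measureReal_eq_add_of_eq_zero_or_one (μ := μ) (hMm 1) (hMb 1) {ω | M 0 ω = 1}
  have hD := measureReal_eq_add_of_eq_zero_or_one (μ := μ) hDm hDb Set.univ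
  simp only [Set.inter_self, Set.inter_univ, probReal_univ] at hA₁ hA₀ hA hD
  rw [Set.inter_comm {ω | M 1 ω = 1}] at hA₀
  rw [Set.inter_comm {ω | M 1 ω = 1}, Set.inter_comm {ω | M 1 ω = 0}] at hM₀
  simp only [← measureReal_def, Set.ofPred_and]
  rw [hnum]
  congr 1
  · linear_combination (∫ ω, Y 1 1 ω ∂μ) * hA₁ - (∫ ω, Y 0 1 ω ∂μ) * hA₀
      + μ.real {ω | D ω = 1} * (∫ ω, Y 1 1 ω ∂μ) * hM₁
      - μ.real {ω | D ω = 0} * (∫ ω, Y 0 1 ω ∂μ) * hM₀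
      - μ.real ({ω | M 0 ω = 1} ∩ {ω | M 1 ω = 1}) * ((∫ ω, Y 1 1 ω ∂μ) - ∫ ω, Y 0 1 ω ∂μ) * hD
  · linear_combination hA + μ.real {ω | D ω = 1} * hM₁ + μ.real {ω | D ω = 0} * hM₀
      - μ.real ({ω | M 0 ω = 1} ∩ {ω | M 1 ω = 1}) * hD

/-- Under mandatory reporting and mutual independence, provided
P(M=1) > 0 (with M = D·M(1)+(1−D)·M(0)),
ATE_{M=1} = E[Y(1)−Y(0) | M=1] = (w·θ)/(w·1) where
θ = (β_Y, β_Y + E[Y(0,1)], −E[Y(0,1)], 0) and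
w = (P(S=al), (P(S=ma)+β_M)·P(D=1), P(S=ma)·P(D=0), 0),
with β_M = P(S=mi) − P(S=ma) (so P(S=ma)+β_M = P(S=mi)) and β_Y = E[Y(1,1)]−E[Y(0,1)]. -/
theorem stmt8 {Ω : Type*} [MeasurableSpace Ω] (μ : Measure Ω) [IsProbabilityMeasure μ]
    (D : Ω → ℝ) (M : Fin 2 → Ω → ℝ) (Y : Fin 2 → Fin 2 → Ω → ℝ)
    (hDm : Measurable D) (hMm : ∀ d, Measurable (M d)) (hYm : ∀ d m, Measurable (Y d m))
    (hDb : ∀ ω, D ω = 0 ∨ D ω = 1)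
    (hMb : ∀ d ω, M d ω = 0 ∨ M d ω = 1)
    (hYb : ∀ d m ω, Y d m ω = 0 ∨ Y d m ω = 1)
    (hindep1 : IndepFun D (fun ω => (M 0 ω, M 1 ω)) μ)
    (hindep2 : IndepFun (fun ω => (D ω, M 0 ω, M 1 ω))
      (fun ω => (Y 0 0 ω, Y 0 1 ω, Y 1 0 ω, Y 1 1 ω)) μ)
    (hmand : ∀ d : Fin 2, ∀ᵐ ω ∂μ, Y d 0 ω = 0)
    (hpos : 0 < (μ {ω | D ω * M 1 ω + (1 - D ω) * M 0 ω = 1}).toReal) :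
    (∫ ω in {ω | D ω * M 1 ω + (1 - D ω) * M 0 ω = 1},
        (((1 - M 1 ω) * Y 1 0 ω + M 1 ω * Y 1 1 ω)
          - ((1 - M 0 ω) * Y 0 0 ω + M 0 ω * Y 0 1 ω)) ∂μ)
      / (μ {ω | D ω * M 1 ω + (1 - D ω) * M 0 ω = 1}).toReal
    = ((μ {ω | M 0 ω = 1 ∧ M 1 ω = 1}).toReal
          * ((∫ ω, Y 1 1 ω ∂μ) - (∫ ω, Y 0 1 ω ∂μ))
        + ((μ {ω | M 0 ω = 1 ∧ M 1 ω = 0}).toReal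
            + ((μ {ω | M 0 ω = 0 ∧ M 1 ω = 1}).toReal
              - (μ {ω | M 0 ω = 1 ∧ M 1 ω = 0}).toReal))
          * (μ {ω | D ω = 1}).toReal
          * (((∫ ω, Y 1 1 ω ∂μ) - (∫ ω, Y 0 1 ω ∂μ)) + (∫ ω, Y 0 1 ω ∂μ))
        + (μ {ω | M 0 ω = 1 ∧ M 1 ω = 0}).toReal * (μ {ω | D ω = 0}).toReal
          * (-(∫ ω, Y 0 1 ω ∂μ)))
      / ((μ {ω | M 0 ω = 1 ∧ M 1 ω = 1}).toReal
        + ((μ {ω | M 0 ω = 1 ∧ M 1 ω = 0}).toReal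
            + ((μ {ω | M 0 ω = 0 ∧ M 1 ω = 1}).toReal
              - (μ {ω | M 0 ω = 1 ∧ M 1 ω = 0}).toReal))
          * (μ {ω | D ω = 1}).toReal
        + (μ {ω | M 0 ω = 1 ∧ M 1 ω = 0}).toReal * (μ {ω | D ω = 0}).toReal) :=
  stmt8_general μ D M Y hDm hMm hYm hDb hMb hYb hindep1 hindep2 hmand
end

section
/- There exists a joint distribution of binary (D, M(0), M(1), Y(d,m)) satisfying mutual independence and mandatory reporting with β_M > 0 and β_Y > 0 but ATE_{M=1} < 0. Concretely, with β_M=β_Y=0.01, P(S=al)=0.1, P(S=ma)=0.05, E[Y(0,1)]=0.1, P(D=1)=0.01, one obtains ATE_{M=1} = −0.003884 < 0. -/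
/-!
Under mandatory reporting only `Y(d, 1)` enters, and since `M(d)² = M(d)` the effect on the
reported set `{D M(1) + (1 - D) M(0) = 1}` becomes `A Y(1,1) - B Y(0,1)` with
`A = D M(1) + (1 - D) M(0) M(1)` and `B = D M(0) M(1) + (1 - D) M(0)`. The two independence
assumptions then factor every expectation, which is the paper's weighted average with
`P(S = al) = E[M(0) M(1)]`, `P(S = ma) = E[M(0)] - P(S = al)`, `P(S = mi) = E[M(1)] - P(S = al)`.
Independent Bernoulli coordinates realise the prescribed parameters, and the average comes out as
`-0.003884 / 0.1501 < 0`.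
-/

open MeasureTheory ProbabilityTheory

section

variable {Ω : Type*} {f g d a b : Ω → ℝ}

def Binary (f : Ω → ℝ) : Prop := ∀ ω, f ω = 0 ∨ f ω = 1

namespace Binary

lemma mul_self (hf : Binary f) (ω : Ω) : f ω * f ω = f ω := by
  rcases hf ω with h | h <;> simp [h]

lemma norm_le_one (hf : Binary f) (ω : Ω) : ‖f ω‖ ≤ 1 := by
  rcases hf ω with h | h <;> simp [h]

lemma mul (hf : Binary f) (hg : Binary g) : Binary fun ω => f ω * g ω := fun ω => by
  rcases hf ω with h | h <;> simp [h, hg ω]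

lemma one_sub (hf : Binary f) : Binary fun ω => 1 - f ω := fun ω => by
  rcases hf ω with h | h <;> simp [h]

lemma mux (hd : Binary d) (ha : Binary a) (hb : Binary b) :
    Binary fun ω => d ω * a ω + (1 - d ω) * b ω := fun ω => by
  rcases hd ω with h | h <;> simp [h, ha ω, hb ω]

lemma indicator_eq_mul (hf : Binary f) (g : Ω → ℝ) :
    {ω | f ω = 1}.indicator g = fun ω => f ω * g ω := by
  ext ω
  rcases hf ω with h | h <;> simp [h]

variable [MeasurableSpace Ω] {μ : Measure Ω}

lemma integrable [IsFiniteMeasure μ] (hf : Binary f) (hfm : Measurable f) : Integrable f μ :=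
  .of_bound hfm.aestronglyMeasurable 1 (.of_forall hf.norm_le_one)

lemma integrable_mul (hd : Binary d) (hdm : Measurable d) (ha : Integrable a μ) :
    Integrable (fun ω => d ω * a ω) μ :=
  ha.bdd_mul hdm.aestronglyMeasurable (.of_forall hd.norm_le_one)

lemma measureReal_eq_integral (hf : Binary f) (hfm : Measurable f) :
    μ.real {ω | f ω = 1} = ∫ ω, f ω ∂μ := by
  have hs : MeasurableSet {ω | f ω = 1} := hfm (measurableSet_singleton 1)
  rw [← integral_indicator_one hs, indicator_eq_mul hf]
  simp

lemma measureReal_and_eq_one (hf : Binary f) (hg : Binary g) (hfm : Measurable f)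
    (hgm : Measurable g) : μ.real {ω | f ω = 1 ∧ g ω = 1} = ∫ ω, f ω * g ω ∂μ := by
  rw [← (hf.mul hg).measureReal_eq_integral (hfm.mul hgm)]
  congr 1
  ext ω
  rcases hf ω with h | h <;> simp [h]

lemma measureReal_and_eq_zero [IsFiniteMeasure μ] (hf : Binary f) (hg : Binary g)
    (hfm : Measurable f) (hgm : Measurable g) :
    μ.real {ω | f ω = 1 ∧ g ω = 0} = (∫ ω, f ω ∂μ) - ∫ ω, f ω * g ω ∂μ := by
  calc μ.real {ω | f ω = 1 ∧ g ω = 0} = μ.real {ω | f ω = 1 ∧ 1 - g ω = 1} := by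
        simp_rw [sub_eq_self]
    _ = ∫ ω, f ω - f ω * g ω ∂μ := by
        simp_rw [hf.measureReal_and_eq_one hg.one_sub hfm (by fun_prop), mul_sub, mul_one]
    _ = _ := integral_sub (hf.integrable hfm) (hf.integrable_mul hfm (hg.integrable hgm))

theorem integral_mux [IsProbabilityMeasure μ] (hd : Binary d) (hdm : Measurable d)
    (ha : Integrable a μ) (hb : Integrable b μ) (hda : IndepFun d a μ) (hdb : IndepFun d b μ) :
    ∫ ω, d ω * a ω + (1 - d ω) * b ω ∂μ
      = (∫ ω, d ω ∂μ) * (∫ ω, a ω ∂μ) + (1 - ∫ ω, d ω ∂μ) * ∫ ω, b ω ∂μ := by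
  have hdb' : IndepFun (fun ω => 1 - d ω) b μ :=
    hdb.comp (measurable_const.sub measurable_id) measurable_id
  rw [integral_add (hd.integrable_mul hdm ha) (hd.one_sub.integrable_mul (by fun_prop) hb),
    hda.integral_fun_mul_eq_mul_integral hdm.aestronglyMeasurable ha.aestronglyMeasurable,
    hdb'.integral_fun_mul_eq_mul_integral (by fun_prop) hb.aestronglyMeasurable,
    integral_sub (integrable_const 1) (hd.integrable hdm)]
  simp

end Binary

end

section ReportedEffect

variable {Ω : Type*} [MeasurableSpace Ω] {μ : Measure Ω} [IsProbabilityMeasure μ]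
  {D : Ω → ℝ} {M : Fin 2 → Ω → ℝ} {Y : Fin 2 → Fin 2 → Ω → ℝ}

theorem measureReal_reported_eq (hD : Binary D) (hM : ∀ d, Binary (M d)) (hDm : Measurable D)
    (hMm : ∀ d, Measurable (M d)) (hDM : IndepFun D (fun ω => (M 0 ω, M 1 ω)) μ) :
    μ.real {ω | D ω * M 1 ω + (1 - D ω) * M 0 ω = 1}
      = (∫ ω, D ω ∂μ) * (∫ ω, M 1 ω ∂μ) + (1 - ∫ ω, D ω ∂μ) * ∫ ω, M 0 ω ∂μ := by
  rw [(hD.mux (hM 1) (hM 0)).measureReal_eq_integral (by fun_prop)]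
  exact hD.integral_mux hDm ((hM 1).integrable (hMm 1)) ((hM 0).integrable (hMm 0))
    (hDM.comp measurable_id measurable_snd) (hDM.comp measurable_id measurable_fst)

theorem setIntegral_reported_effect_eq (hD : Binary D) (hM : ∀ d, Binary (M d))
    (hY : ∀ d m, Binary (Y d m)) (hDm : Measurable D) (hMm : ∀ d, Measurable (M d))
    (hYm : ∀ d m, Measurable (Y d m)) (hDM : IndepFun D (fun ω => (M 0 ω, M 1 ω)) μ)
    (hDMY : IndepFun (fun ω => (D ω, M 0 ω, M 1 ω))
      (fun ω => (Y 0 0 ω, Y 0 1 ω, Y 1 0 ω, Y 1 1 ω)) μ)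
    (hY0 : ∀ d : Fin 2, ∀ᵐ ω ∂μ, Y d 0 ω = 0) :
    ∫ ω in {ω | D ω * M 1 ω + (1 - D ω) * M 0 ω = 1},
        (((1 - M 1 ω) * Y 1 0 ω + M 1 ω * Y 1 1 ω)
          - ((1 - M 0 ω) * Y 0 0 ω + M 0 ω * Y 0 1 ω)) ∂μ
      = ((∫ ω, D ω ∂μ) * (∫ ω, M 1 ω ∂μ) + (1 - ∫ ω, D ω ∂μ) * ∫ ω, M 0 ω * M 1 ω ∂μ)
          * (∫ ω, Y 1 1 ω ∂μ)
        - ((∫ ω, D ω ∂μ) * (∫ ω, M 0 ω * M 1 ω ∂μ) + (1 - ∫ ω, D ω ∂μ) * ∫ ω, M 0 ω ∂μ)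
          * ∫ ω, Y 0 1 ω ∂μ := by
  have hMM := (hM 0).mul (hM 1)
  have hpoint : {ω | D ω * M 1 ω + (1 - D ω) * M 0 ω = 1}.indicator
      (fun ω => ((1 - M 1 ω) * Y 1 0 ω + M 1 ω * Y 1 1 ω)
        - ((1 - M 0 ω) * Y 0 0 ω + M 0 ω * Y 0 1 ω))
      =ᵐ[μ] fun ω => (D ω * M 1 ω + (1 - D ω) * (M 0 ω * M 1 ω)) * Y 1 1 ω
        - (D ω * (M 0 ω * M 1 ω) + (1 - D ω) * M 0 ω) * Y 0 1 ω := by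
    filter_upwards [hY0 0, hY0 1] with ω h0 h1
    rw [(hD.mux (hM 1) (hM 0)).indicator_eq_mul]
    simp only [h0, h1]
    linear_combination (D ω * Y 1 1 ω) * (hM 1).mul_self ω
      - (1 - D ω) * Y 0 1 ω * (hM 0).mul_self ω
  have hAY : IndepFun (fun ω => D ω * M 1 ω + (1 - D ω) * (M 0 ω * M 1 ω)) (Y 1 1) μ :=
    hDMY.comp (φ := fun x : ℝ × ℝ × ℝ => x.1 * x.2.2 + (1 - x.1) * (x.2.1 * x.2.2))
      (ψ := fun y : ℝ × ℝ × ℝ × ℝ => y.2.2.2) (by fun_prop) (by fun_prop)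
  have hBY : IndepFun (fun ω => D ω * (M 0 ω * M 1 ω) + (1 - D ω) * M 0 ω) (Y 0 1) μ :=
    hDMY.comp (φ := fun x : ℝ × ℝ × ℝ => x.1 * (x.2.1 * x.2.2) + (1 - x.1) * x.2.1)
      (ψ := fun y : ℝ × ℝ × ℝ × ℝ => y.2.1) (by fun_prop) (by fun_prop)
  have hDMM : IndepFun D (fun ω => M 0 ω * M 1 ω) μ :=
    hDM.comp (ψ := fun p : ℝ × ℝ => p.1 * p.2) measurable_id (by fun_prop)
  have hInt := fun d => (hM d).integrable (μ := μ) (hMm d)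
  rw [← integral_indicator (measurableSet_eq_fun (by fun_prop) measurable_const),
    integral_congr_ae hpoint,
    integral_sub (((hD.mux (hM 1) hMM).mul (hY 1 1)).integrable (by fun_prop))
      (((hD.mux hMM (hM 0)).mul (hY 0 1)).integrable (by fun_prop)),
    hAY.integral_fun_mul_eq_mul_integral (by fun_prop) (by fun_prop),
    hBY.integral_fun_mul_eq_mul_integral (by fun_prop) (by fun_prop),
    hD.integral_mux hDm (hInt 1) (hMM.integrable (by fun_prop))
      (hDM.comp measurable_id measurable_snd) hDMM,
    hD.integral_mux hDm (hMM.integrable (by fun_prop)) (hInt 0)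
      hDMM (hDM.comp measurable_id measurable_fst)]

end ReportedEffect

namespace NegativeReportedEffect

open unitInterval

noncomputable section

-- Coordinates: `D`, `M(0)`, `M(1)` given `M(0) = 1`, `M(1)` given `M(0) = 0`, `Y(0,1)`, `Y(1,1)`;
-- the last one is unused.
def p : Fin 7 → I :=
  ![⟨1/100, by norm_num⟩, ⟨3/20, by norm_num⟩, ⟨2/3, by norm_num⟩, ⟨6/85, by norm_num⟩,
    ⟨1/10, by norm_num⟩, ⟨11/100, by norm_num⟩, 0]

def law (i : Fin 7) : Measure (Fin 2) := Ber(1, 0, p i)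

def μ : Measure (Fin 7 → Fin 2) := Measure.pi law

instance (i : Fin 7) : IsProbabilityMeasure (law i) := by unfold law; infer_instance

instance : IsProbabilityMeasure μ := by unfold μ; infer_instance

def X (i : Fin 7) (ω : Fin 7 → Fin 2) : ℝ := (ω i : ℕ)

lemma binary_X (i : Fin 7) : Binary (X i) := fun ω => by
  unfold X; generalize ω i = x; fin_cases x <;> simp

lemma iIndepFun_X : iIndepFun X μ :=
  iIndepFun_pi (X := fun _ (x : Fin 2) => ((x : ℕ) : ℝ))
    fun _ => (measurable_of_countable _).aemeasurable

lemma integral_X (i : Fin 7) : ∫ ω, X i ω ∂μ = p i := by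
  calc ∫ ω, X i ω ∂μ = ∫ x : Fin 2, ((x : ℕ) : ℝ) ∂law i := by
        unfold μ X
        exact integral_comp_eval (μ := law) (i := i)
          (measurable_of_countable fun x : Fin 2 => ((x : ℕ) : ℝ)).aestronglyMeasurable
    _ = p i := by simp [law, integral_bernoulliMeasure]

lemma integral_X_mul_X {i j : Fin 7} (hij : i ≠ j) :
    ∫ ω, X i ω * X j ω ∂μ = p i * p j := by
  rw [(iIndepFun_X.indepFun hij).integral_fun_mul_eq_mul_integral
      (measurable_of_countable _).aestronglyMeasurable
      (measurable_of_countable _).aestronglyMeasurable,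
    integral_X, integral_X]

def D : (Fin 7 → Fin 2) → ℝ := X 0

def M : Fin 2 → (Fin 7 → Fin 2) → ℝ := ![X 1, fun ω => X 1 ω * X 2 ω + (1 - X 1 ω) * X 3 ω]

def Y : Fin 2 → Fin 2 → (Fin 7 → Fin 2) → ℝ := ![![0, X 4], ![0, X 5]]

lemma binary_D : Binary D := binary_X 0

lemma binary_M (d : Fin 2) : Binary (M d) := by
  fin_cases d
  exacts [binary_X 1, (binary_X 1).mux (binary_X 2) (binary_X 3)]

lemma binary_Y (d m : Fin 2) : Binary (Y d m) := by
  fin_cases d <;> fin_cases m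
  exacts [fun _ => .inl rfl, binary_X 4, fun _ => .inl rfl, binary_X 5]

lemma indepFun_D_M : IndepFun D (fun ω => (M 0 ω, M 1 ω)) μ :=
  (iIndepFun_X.indepFun_finset {0} {1, 2, 3} (by decide) fun _ => measurable_of_countable _).comp
    (φ := fun x : ({0} : Finset (Fin 7)) → ℝ => x ⟨0, by simp⟩)
    (ψ := fun x : ({1, 2, 3} : Finset (Fin 7)) → ℝ => (x ⟨1, by simp⟩,
      x ⟨1, by simp⟩ * x ⟨2, by simp⟩ + (1 - x ⟨1, by simp⟩) * x ⟨3, by simp⟩))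
    (by fun_prop) (by fun_prop)

lemma indepFun_DM_Y : IndepFun (fun ω => (D ω, M 0 ω, M 1 ω))
    (fun ω => (Y 0 0 ω, Y 0 1 ω, Y 1 0 ω, Y 1 1 ω)) μ :=
  (iIndepFun_X.indepFun_finset {0, 1, 2, 3} {4, 5} (by decide)
    fun _ => measurable_of_countable _).comp
    (φ := fun x : ({0, 1, 2, 3} : Finset (Fin 7)) → ℝ => (x ⟨0, by simp⟩, x ⟨1, by simp⟩,
      x ⟨1, by simp⟩ * x ⟨2, by simp⟩ + (1 - x ⟨1, by simp⟩) * x ⟨3, by simp⟩))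
    (ψ := fun x : ({4, 5} : Finset (Fin 7)) → ℝ => (0, x ⟨4, by simp⟩, 0, x ⟨5, by simp⟩))
    (by fun_prop) (by fun_prop)

lemma integral_D : ∫ ω, D ω ∂μ = 1 / 100 := by
  simp [D, integral_X, p]

lemma integral_M_zero : ∫ ω, M 0 ω ∂μ = 3 / 20 := by
  simp [M, integral_X, p]

lemma integral_M_one : ∫ ω, M 1 ω ∂μ = 4 / 25 := by
  simp only [M, Matrix.cons_val_one, Matrix.cons_val_zero]
  rw [(binary_X 1).integral_mux (measurable_of_countable _) .of_finite .of_finite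
    (iIndepFun_X.indepFun (by decide)) (iIndepFun_X.indepFun (by decide))]
  simp [integral_X, p]
  norm_num

lemma integral_M_zero_mul_M_one : ∫ ω, M 0 ω * M 1 ω ∂μ = 1 / 10 := by
  have h (ω : Fin 7 → Fin 2) : M 0 ω * M 1 ω = X 1 ω * X 2 ω := by
    simp only [M, Matrix.cons_val_one, Matrix.cons_val_zero]
    linear_combination (X 2 ω - X 3 ω) * (binary_X 1).mul_self ω
  simp_rw [h, integral_X_mul_X (show (1 : Fin 7) ≠ 2 by decide)]
  simp [p]
  norm_num

lemma integral_Y_zero_one : ∫ ω, Y 0 1 ω ∂μ = 1 / 10 := by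
  simp [Y, integral_X, p]

lemma integral_Y_one_one : ∫ ω, Y 1 1 ω ∂μ = 11 / 100 := by
  simp [Y, integral_X, p]

end

end NegativeReportedEffect

open NegativeReportedEffect in
/-- There exists a joint distribution of binary (D, M(0), M(1), Y(d,m))
satisfying mutual independence and mandatory reporting with β_M > 0 and β_Y > 0 but
ATE_{M=1} < 0.  Concretely, with β_M = β_Y = 0.01, P(S=al)=0.1, P(S=ma)=0.05,
E[Y(0,1)]=0.1, P(D=1)=0.01, the weighted-average formula gives
w·θ = −0.003884 and ATE_{M=1} = (w·θ)/(w·1) < 0. -/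
theorem stmt10 :
    (∃ (μ : Measure (Fin 7 → Fin 2)) (_ : IsProbabilityMeasure μ)
      (D : (Fin 7 → Fin 2) → ℝ) (M : Fin 2 → (Fin 7 → Fin 2) → ℝ)
      (Y : Fin 2 → Fin 2 → (Fin 7 → Fin 2) → ℝ),
      Measurable D ∧ (∀ d, Measurable (M d)) ∧ (∀ d m, Measurable (Y d m))
      ∧ (∀ ω, D ω = 0 ∨ D ω = 1)
      ∧ (∀ d ω, M d ω = 0 ∨ M d ω = 1)
      ∧ (∀ d m ω, Y d m ω = 0 ∨ Y d m ω = 1)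
      ∧ IndepFun D (fun ω => (M 0 ω, M 1 ω)) μ
      ∧ IndepFun (fun ω => (D ω, M 0 ω, M 1 ω))
          (fun ω => (Y 0 0 ω, Y 0 1 ω, Y 1 0 ω, Y 1 1 ω)) μ
      ∧ (∀ d : Fin 2, ∀ᵐ ω ∂μ, Y d 0 ω = 0)
      ∧ (∫ ω, M 1 ω ∂μ) - (∫ ω, M 0 ω ∂μ) = 0.01
      ∧ (∫ ω, Y 1 1 ω ∂μ) - (∫ ω, Y 0 1 ω ∂μ) = 0.01
      ∧ (μ {ω | M 0 ω = 1 ∧ M 1 ω = 1}).toReal = 0.1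
      ∧ (μ {ω | M 0 ω = 1 ∧ M 1 ω = 0}).toReal = 0.05
      ∧ (∫ ω, Y 0 1 ω ∂μ) = 0.1
      ∧ (μ {ω | D ω = 1}).toReal = 0.01
      ∧ 0 < (μ {ω | D ω * M 1 ω + (1 - D ω) * M 0 ω = 1}).toReal
      ∧ (∫ ω in {ω | D ω * M 1 ω + (1 - D ω) * M 0 ω = 1},
            (((1 - M 1 ω) * Y 1 0 ω + M 1 ω * Y 1 1 ω)
              - ((1 - M 0 ω) * Y 0 0 ω + M 0 ω * Y 0 1 ω)) ∂μ)
          / (μ {ω | D ω * M 1 ω + (1 - D ω) * M 0 ω = 1}).toReal < 0)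
    ∧ ((0.1 * 0.01 + (0.05 + 0.01) * 0.01 * (0.01 + 0.1)
          - 0.05 * (1 - 0.01) * 0.1 : ℝ) = -0.003884)
    ∧ ((0.1 * 0.01 + (0.05 + 0.01) * 0.01 * (0.01 + 0.1) - 0.05 * (1 - 0.01) * 0.1)
          / (0.1 + (0.05 + 0.01) * 0.01 + 0.05 * (1 - 0.01)) : ℝ) < 0 := by
  have hDm : Measurable D := measurable_of_countable _
  have hMm (d : Fin 2) : Measurable (M d) := measurable_of_countable _
  have hYm (d m : Fin 2) : Measurable (Y d m) := measurable_of_countable _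
  have hY0 (d : Fin 2) : ∀ᵐ ω ∂μ, Y d 0 ω = 0 := .of_forall fun ω => by fin_cases d <;> rfl
  have hR : μ.real {ω | D ω * M 1 ω + (1 - D ω) * M 0 ω = 1} = 1501 / 10000 := by
    rw [measureReal_reported_eq binary_D binary_M hDm hMm indepFun_D_M, integral_D,
      integral_M_zero, integral_M_one]
    norm_num
  have hnum : ∫ ω in {ω | D ω * M 1 ω + (1 - D ω) * M 0 ω = 1},
      (((1 - M 1 ω) * Y 1 0 ω + M 1 ω * Y 1 1 ω) - ((1 - M 0 ω) * Y 0 0 ω + M 0 ω * Y 0 1 ω)) ∂μ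
        = -3884 / 1000000 := by
    rw [setIntegral_reported_effect_eq binary_D binary_M binary_Y hDm hMm hYm indepFun_D_M
        indepFun_DM_Y hY0, integral_D, integral_M_zero, integral_M_one, integral_M_zero_mul_M_one,
      integral_Y_zero_one, integral_Y_one_one]
    norm_num
  refine ⟨⟨μ, inferInstance, D, M, Y, hDm, hMm, hYm, binary_D, binary_M, binary_Y, indepFun_D_M,
    indepFun_DM_Y, hY0, ?_, ?_, ?_, ?_, ?_, ?_, ?_, ?_⟩, by norm_num, by norm_num⟩
  all_goals simp only [← measureReal_def,
    (binary_M 0).measureReal_and_eq_one (binary_M 1) (hMm 0) (hMm 1),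
    (binary_M 0).measureReal_and_eq_zero (binary_M 1) (hMm 0) (hMm 1),
    binary_D.measureReal_eq_integral hDm, hR, hnum, integral_D, integral_M_zero, integral_M_one,
    integral_M_zero_mul_M_one, integral_Y_zero_one, integral_Y_one_one]
  all_goals norm_num
end

section
/- There exists a joint distribution of binary (D, M(0), M(1), Y(d,m)) satisfying mutual independence and mandatory reporting with β_M < 0 and β_Y < 0 but ATT_{M=1} > 0. Concretely, with β_M=β_Y=−0.01, P(S=al)=0.1, P(S=ma)=0.05, E[Y(0,1)]=0.1, the formula gives ATT_{M=1} = 0.0026 > 0. -/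
/-!
Take seven independent Bernoulli coordinates and build `D`, `M(0)`, `M(1)`, `Y(d, 1)` from them,
with `Y(d, 0) = 0`. Independence holds because the three groups of variables are functions of
disjoint blocks of coordinates. Since the coordinates are `0`/`1`-valued, every event and integrand
in the statement is a polynomial in the coordinates, and the expectation of a monomial is the
product of its parameters. On `{D = 1, M(1) = 1}` the treatment effect is `Y(1,1) - M(0) Y(0,1)`,
whose integral is `P(D = 1) (E M(1) · E Y(1,1) - P(al) · E Y(0,1)) = (7/50 · 9/100 - 1/100) / 2 > 0`.
-/

open MeasureTheory ProbabilityTheory unitInterval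

theorem integral_prod_val_pi_bernoulliMeasure {ι : Type*} [Fintype ι] [DecidableEq ι] (p : ι → I)
    (s : Finset ι) :
    ∫ ω, ∏ i ∈ s, ((ω i : ℕ) : ℝ) ∂Measure.pi (fun i ↦ Ber((1 : Fin 2), 0, p i)) =
      ∏ i ∈ s, (p i : ℝ) := by
  have h := integral_fintype_prod_eq_prod (E := fun _ ↦ Fin 2)
    (fun i x ↦ if i ∈ s then ((x : ℕ) : ℝ) else 1) (μ := fun i ↦ Ber((1 : Fin 2), 0, p i))
  simp only [Finset.prod_ite_mem, Finset.univ_inter] at h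
  rw [h, ← Fintype.prod_ite_mem s]
  refine Fintype.prod_congr _ _ fun i ↦ ?_
  split_ifs <;> simp [integral_bernoulliMeasure]

theorem setIntegral_setOf_eq_one {Ω : Type*} [MeasurableSpace Ω] {μ : Measure Ω} {f g : Ω → ℝ}
    (hf : ∀ ω, f ω = 0 ∨ f ω = 1) (hs : MeasurableSet {ω | f ω = 1}) :
    ∫ ω in {ω | f ω = 1}, g ω ∂μ = ∫ ω, f ω * g ω ∂μ := by
  rw [← integral_indicator hs]
  congr 1 with ω
  rcases hf ω with h | h <;> simp [h]

theorem measureReal_setOf_eq_one {Ω : Type*} [MeasurableSpace Ω] {μ : Measure Ω} {f : Ω → ℝ}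
    (hf : ∀ ω, f ω = 0 ∨ f ω = 1) (hs : MeasurableSet {ω | f ω = 1}) :
    μ.real {ω | f ω = 1} = ∫ ω, f ω ∂μ := by
  simpa using setIntegral_setOf_eq_one (μ := μ) (g := 1) hf hs

theorem indepFun_pi_of_dependsOn {ι : Type*} [Fintype ι] {Ω : ι → Type*}
    [∀ i, MeasurableSpace (Ω i)] [∀ i, Countable (Ω i)] [∀ i, MeasurableSingletonClass (Ω i)]
    {μ : ∀ i, Measure (Ω i)} [∀ i, IsProbabilityMeasure (μ i)]
    {β γ : Type*} [MeasurableSpace β] [MeasurableSpace γ]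
    {f : (∀ i, Ω i) → β} {g : (∀ i, Ω i) → γ} {S T : Finset ι} (hST : Disjoint S T)
    (hf : DependsOn f S) (hg : DependsOn g T) : IndepFun f g (Measure.pi μ) := by
  have hΩ : Nonempty (∀ i, Ω i) := ⟨fun i ↦ (nonempty_of_isProbabilityMeasure (μ i)).some⟩
  have : Nonempty β := ⟨f hΩ.some⟩
  have : Nonempty γ := ⟨g hΩ.some⟩
  obtain ⟨f', rfl⟩ := dependsOn_iff_exists_comp.1 hf
  obtain ⟨g', rfl⟩ := dependsOn_iff_exists_comp.1 hg
  have hcoord := (iIndepFun_pi (μ := μ) (X := fun _ ↦ id) fun _ ↦ aemeasurable_id).indepFun_finset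
    S T hST fun i ↦ measurable_pi_apply i
  exact hcoord.comp (measurable_of_countable f') (measurable_of_countable g')

namespace MandatoryReportingExample

abbrev Ω := Fin 7 → Fin 2

/- Coordinate `i` is a Bernoulli(`param i`) bit: `0 ↦ D`, `1 ↦ M(0)`, `2` and `3 ↦ M(1)` on
`{M(0) = 1}` and on `{M(0) = 0}`, `4 ↦ Y(0,1)`, `5 ↦ Y(1,1)`; coordinate `6` is unused. Then
`P(al) = 3/20 · 2/3 = 1/10`, `P(ma) = 3/20 · 1/3 = 1/20` and `E M(1) = 1/10 + 17/20 · 4/85 = 7/50`. -/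
noncomputable def param : Fin 7 → I :=
  ![⟨1/2, by norm_num, by norm_num⟩, ⟨3/20, by norm_num, by norm_num⟩,
    ⟨2/3, by norm_num, by norm_num⟩, ⟨4/85, by norm_num, by norm_num⟩,
    ⟨1/10, by norm_num, by norm_num⟩, ⟨9/100, by norm_num, by norm_num⟩, 0]

noncomputable def μ : Measure Ω := Measure.pi fun i ↦ Ber((1 : Fin 2), 0, param i)

instance : IsProbabilityMeasure μ := by unfold μ; infer_instance

def X (i : Fin 7) (ω : Ω) : ℝ := (ω i : ℕ)

def D : Ω → ℝ := X 0

def M : Fin 2 → Ω → ℝ := ![X 1, fun ω ↦ X 1 ω * X 2 ω + (1 - X 1 ω) * X 3 ω]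

def Y : Fin 2 → Fin 2 → Ω → ℝ := ![![0, X 4], ![0, X 5]]

lemma X_eq_zero_or_one (i : Fin 7) (ω : Ω) : X i ω = 0 ∨ X i ω = 1 := by
  rcases Fin.exists_fin_two.mp ⟨ω i, rfl⟩ with h | h <;> simp [X, h]

lemma integral_monomial (s : Finset (Fin 7)) :
    ∫ ω, ∏ i ∈ s, X i ω ∂μ = ∏ i ∈ s, (param i : ℝ) :=
  integral_prod_val_pi_bernoulliMeasure param s

lemma M_eq_zero_or_one (d : Fin 2) (ω : Ω) : M d ω = 0 ∨ M d ω = 1 := by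
  fin_cases d
  · exact X_eq_zero_or_one 1 ω
  · rcases X_eq_zero_or_one 1 ω with h1 | h1 <;> simp [M, h1, X_eq_zero_or_one]

lemma M_zero_mul_M_one (ω : Ω) : M 0 ω * M 1 ω = X 1 ω * X 2 ω := by
  rcases X_eq_zero_or_one 1 ω with h1 | h1 <;> simp [M, h1]

lemma Y_eq_zero_or_one (d m : Fin 2) (ω : Ω) : Y d m ω = 0 ∨ Y d m ω = 1 := by
  fin_cases d <;> fin_cases m
  · exact .inl rfl
  · exact X_eq_zero_or_one 4 ω
  · exact .inl rfl
  · exact X_eq_zero_or_one 5 ω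

lemma indepFun_D_M : IndepFun D (fun ω ↦ (M 0 ω, M 1 ω)) μ := by
  refine indepFun_pi_of_dependsOn (S := {0}) (T := {1, 2, 3}) (by decide) ?_ ?_
  · intro ω ω' h
    simp [D, X, h 0 (by simp)]
  · intro ω ω' h
    simp [M, X, h 1 (by simp), h 2 (by simp), h 3 (by simp)]

lemma indepFun_DM_Y : IndepFun (fun ω ↦ (D ω, M 0 ω, M 1 ω))
    (fun ω ↦ (Y 0 0 ω, Y 0 1 ω, Y 1 0 ω, Y 1 1 ω)) μ := by
  refine indepFun_pi_of_dependsOn (S := {0, 1, 2, 3}) (T := {4, 5}) (by decide) ?_ ?_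
  · intro ω ω' h
    simp [D, M, X, h 0 (by simp), h 1 (by simp), h 2 (by simp), h 3 (by simp)]
  · intro ω ω' h
    simp [Y, X, h 4 (by simp), h 5 (by simp)]

lemma integral_M_zero : ∫ ω, M 0 ω ∂μ = 3/20 := by
  simpa [M, param] using integral_monomial {1}

lemma integral_Y_zero_one : ∫ ω, Y 0 1 ω ∂μ = 1/10 := by
  simpa [Y, param] using integral_monomial {4}

lemma integral_Y_one_one : ∫ ω, Y 1 1 ω ∂μ = 9/100 := by
  simpa [Y, param] using integral_monomial {5}

lemma integral_M_one : ∫ ω, M 1 ω ∂μ = 7/50 := by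
  have h (ω : Ω) : M 1 ω = ∏ i ∈ {1, 2}, X i ω + ∏ i ∈ {3}, X i ω - ∏ i ∈ {1, 3}, X i ω := by
    simp [M]; ring
  simp only [h, integral_add, integral_sub, Integrable.of_finite, integral_monomial]
  simp [param, Finset.prod_insert]
  norm_num

lemma measureReal_M_zero_eq_one_and_M_one_eq_one :
    μ.real {ω | M 0 ω = 1 ∧ M 1 ω = 1} = 1/10 := by
  have hs : {ω | M 0 ω = 1 ∧ M 1 ω = 1} = {ω | M 0 ω * M 1 ω = 1} := by
    ext ω
    rcases M_eq_zero_or_one 0 ω with h0 | h0 <;> rcases M_eq_zero_or_one 1 ω with h1 | h1 <;>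
      simp [h0, h1]
  have hbin (ω : Ω) : M 0 ω * M 1 ω = 0 ∨ M 0 ω * M 1 ω = 1 := by
    rcases M_eq_zero_or_one 0 ω with h0 | h0 <;> simp [h0, M_eq_zero_or_one]
  have h (ω : Ω) : M 0 ω * M 1 ω = ∏ i ∈ {1, 2}, X i ω := by
    simp [M_zero_mul_M_one]
  rw [hs, measureReal_setOf_eq_one hbin MeasurableSet.of_discrete]
  simp only [h, integral_monomial]
  simp [param, Finset.prod_insert]
  norm_num

lemma measureReal_M_zero_eq_one_and_M_one_eq_zero :
    μ.real {ω | M 0 ω = 1 ∧ M 1 ω = 0} = 1/20 := by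
  have hs : {ω | M 0 ω = 1 ∧ M 1 ω = 0} = {ω | M 0 ω * (1 - M 1 ω) = 1} := by
    ext ω
    rcases M_eq_zero_or_one 0 ω with h0 | h0 <;> rcases M_eq_zero_or_one 1 ω with h1 | h1 <;>
      simp [h0, h1]
  have hbin (ω : Ω) : M 0 ω * (1 - M 1 ω) = 0 ∨ M 0 ω * (1 - M 1 ω) = 1 := by
    rcases M_eq_zero_or_one 0 ω with h0 | h0 <;> rcases M_eq_zero_or_one 1 ω with h1 | h1 <;>
      simp [h0, h1]
  have h (ω : Ω) : M 0 ω * (1 - M 1 ω) = ∏ i ∈ {1}, X i ω - ∏ i ∈ {1, 2}, X i ω := by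
    rw [mul_one_sub, M_zero_mul_M_one]
    simp [M]
  rw [hs, measureReal_setOf_eq_one hbin MeasurableSet.of_discrete]
  simp only [h, integral_sub, Integrable.of_finite, integral_monomial]
  simp [param, Finset.prod_insert]
  norm_num

lemma setOf_D_eq_one_and_M_obs_eq_one :
    {ω | D ω = 1 ∧ D ω * M 1 ω + (1 - D ω) * M 0 ω = 1} = {ω | D ω * M 1 ω = 1} := by
  ext ω
  rcases X_eq_zero_or_one 0 ω with h0 | h0 <;> simp [D, h0]

lemma D_mul_M_one_eq_zero_or_one (ω : Ω) : D ω * M 1 ω = 0 ∨ D ω * M 1 ω = 1 := by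
  rcases X_eq_zero_or_one 0 ω with h0 | h0 <;> simp [D, h0, M_eq_zero_or_one]

lemma measureReal_D_mul_M_one_eq_one :
    μ.real {ω | D ω * M 1 ω = 1} = 7/100 := by
  have h (ω : Ω) : D ω * M 1 ω =
      ∏ i ∈ {0, 1, 2}, X i ω + ∏ i ∈ {0, 3}, X i ω - ∏ i ∈ {0, 1, 3}, X i ω := by
    simp [D, M]; ring
  rw [measureReal_setOf_eq_one D_mul_M_one_eq_zero_or_one MeasurableSet.of_discrete]
  simp only [h, integral_add, integral_sub, Integrable.of_finite, integral_monomial]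
  simp [param, Finset.prod_insert]
  norm_num

lemma setIntegral_D_mul_M_one_eq_one :
    ∫ ω in {ω | D ω * M 1 ω = 1},
      (((1 - M 1 ω) * Y 1 0 ω + M 1 ω * Y 1 1 ω) - ((1 - M 0 ω) * Y 0 0 ω + M 0 ω * Y 0 1 ω)) ∂μ
      = 13/10000 := by
  have h (ω : Ω) : D ω * M 1 ω *
      (((1 - M 1 ω) * Y 1 0 ω + M 1 ω * Y 1 1 ω) - ((1 - M 0 ω) * Y 0 0 ω + M 0 ω * Y 0 1 ω)) =
      ∏ i ∈ {0, 1, 2, 5}, X i ω + ∏ i ∈ {0, 3, 5}, X i ω - ∏ i ∈ {0, 1, 3, 5}, X i ω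
        - ∏ i ∈ {0, 1, 2, 4}, X i ω := by
    rcases X_eq_zero_or_one 1 ω with h1 | h1 <;> rcases X_eq_zero_or_one 2 ω with h2 | h2 <;>
      rcases X_eq_zero_or_one 3 ω with h3 | h3 <;> simp [D, M, Y, h1, h2, h3] <;> ring
  rw [setIntegral_setOf_eq_one D_mul_M_one_eq_zero_or_one MeasurableSet.of_discrete]
  simp only [h, integral_add, integral_sub, Integrable.of_finite, integral_monomial]
  simp [param, Finset.prod_insert]
  norm_num

end MandatoryReportingExample

open MandatoryReportingExample

/-- There exists a joint distribution of binary (D, M(0), M(1), Y(d,m))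
satisfying mutual independence and mandatory reporting with β_M < 0 and β_Y < 0 but
ATT_{M=1} > 0.  Concretely, with β_M = β_Y = −0.01, P(S=al)=0.1, P(S=ma)=0.05,
E[Y(0,1)]=0.1, the weighted-average formula gives w·θ = 0.0026 and
ATT_{M=1} = (w·θ)/(w·1) > 0. -/
theorem stmt11 :
    (∃ (μ : Measure (Fin 7 → Fin 2)) (_ : IsProbabilityMeasure μ)
      (D : (Fin 7 → Fin 2) → ℝ) (M : Fin 2 → (Fin 7 → Fin 2) → ℝ)
      (Y : Fin 2 → Fin 2 → (Fin 7 → Fin 2) → ℝ),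
      Measurable D ∧ (∀ d, Measurable (M d)) ∧ (∀ d m, Measurable (Y d m))
      ∧ (∀ ω, D ω = 0 ∨ D ω = 1)
      ∧ (∀ d ω, M d ω = 0 ∨ M d ω = 1)
      ∧ (∀ d m ω, Y d m ω = 0 ∨ Y d m ω = 1)
      ∧ IndepFun D (fun ω => (M 0 ω, M 1 ω)) μ
      ∧ IndepFun (fun ω => (D ω, M 0 ω, M 1 ω))
          (fun ω => (Y 0 0 ω, Y 0 1 ω, Y 1 0 ω, Y 1 1 ω)) μ
      ∧ (∀ d : Fin 2, ∀ᵐ ω ∂μ, Y d 0 ω = 0)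
      ∧ (∫ ω, M 1 ω ∂μ) - (∫ ω, M 0 ω ∂μ) = -0.01
      ∧ (∫ ω, Y 1 1 ω ∂μ) - (∫ ω, Y 0 1 ω ∂μ) = -0.01
      ∧ (μ {ω | M 0 ω = 1 ∧ M 1 ω = 1}).toReal = 0.1
      ∧ (μ {ω | M 0 ω = 1 ∧ M 1 ω = 0}).toReal = 0.05
      ∧ (∫ ω, Y 0 1 ω ∂μ) = 0.1
      ∧ 0 < (μ {ω | D ω = 1 ∧ D ω * M 1 ω + (1 - D ω) * M 0 ω = 1}).toReal
      ∧ 0 < (∫ ω in {ω | D ω = 1 ∧ D ω * M 1 ω + (1 - D ω) * M 0 ω = 1},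
            (((1 - M 1 ω) * Y 1 0 ω + M 1 ω * Y 1 1 ω)
              - ((1 - M 0 ω) * Y 0 0 ω + M 0 ω * Y 0 1 ω)) ∂μ)
          / (μ {ω | D ω = 1 ∧ D ω * M 1 ω + (1 - D ω) * M 0 ω = 1}).toReal)
    ∧ ((0.1 * (-0.01) + (0.05 + (-0.01)) * ((-0.01) + 0.1) : ℝ) = 0.0026)
    ∧ (0 < ((0.1 * (-0.01) + (0.05 + (-0.01)) * ((-0.01) + 0.1))
          / (0.1 + 0.05 + (-0.01)) : ℝ)) := by
  refine ⟨⟨μ, inferInstance, D, M, Y, measurable_of_countable _,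
    fun _ ↦ measurable_of_countable _, fun _ _ ↦ measurable_of_countable _,
    X_eq_zero_or_one 0, M_eq_zero_or_one, Y_eq_zero_or_one, indepFun_D_M, indepFun_DM_Y,
    fun d ↦ ae_of_all _ fun ω ↦ by fin_cases d <;> rfl, ?_, ?_, ?_, ?_, ?_, ?_, ?_⟩,
    by norm_num, by norm_num⟩
  · rw [integral_M_one, integral_M_zero]; norm_num
  · rw [integral_Y_one_one, integral_Y_zero_one]; norm_num
  · rw [← measureReal_def, measureReal_M_zero_eq_one_and_M_one_eq_one]; norm_num
  · rw [← measureReal_def, measureReal_M_zero_eq_one_and_M_one_eq_zero]; norm_num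
  · rw [integral_Y_zero_one]; norm_num
  · rw [← measureReal_def, setOf_D_eq_one_and_M_obs_eq_one, measureReal_D_mul_M_one_eq_one]; norm_num
  · rw [← measureReal_def, setOf_D_eq_one_and_M_obs_eq_one, measureReal_D_mul_M_one_eq_one,
      setIntegral_D_mul_M_one_eq_one]
    norm_num
end

section
/- Under treatment ignorability (D independent of (Y(d,1), M(d)) jointly, for each d), independence of D and M(d), mandatory reporting Y(d,0)=0 a.s., and consistency, the identification formula E[Y(d)] = E[Y | M=1, D=d] · P(M=1 | D=d) holds for d=0,1, provided P(M=1, D=d)>0. -/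
open MeasureTheory ProbabilityTheory

/-! On `{D = d}` the observed mediator and outcome are `M d` and `Y(d, M d)`, so
`E[Y | M = 1, D = d] · P(M = 1 | D = d) = E[1{D = d} · M(d) Y(d,1)] / P(D = d)`.
Ignorability factors the numerator as `P(D = d) · E[M(d) Y(d,1)]`, and mandatory reporting
`Y(d,0) = 0` makes `E[M(d) Y(d,1)] = E[Y(d)]`. -/

lemma mix_eq_of_eq_fin {x : ℝ} {d : Fin 2} (hx : x = ((d : ℕ) : ℝ)) (a : Fin 2 → ℝ) :
    (1 - x) * a 0 + x * a 1 = a d := by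
  subst hx
  fin_cases d <;> simp

namespace ProbabilityTheory

lemma IndepFun.setIntegral_preimage_eq_mul {Ω β γ : Type*} {mΩ : MeasurableSpace Ω}
    {μ : Measure Ω} [MeasurableSpace β] [MeasurableSpace γ] {X : Ω → β} {Z : Ω → γ}
    {f : γ → ℝ} (hXZ : IndepFun X Z μ) (hX : Measurable X) (hZ : AEMeasurable Z μ)
    (hf : AEStronglyMeasurable f (μ.map Z)) {A : Set β} (hA : MeasurableSet A) :
    ∫ ω in X ⁻¹' A, f (Z ω) ∂μ = μ.real (X ⁻¹' A) * ∫ ω, f (Z ω) ∂μ :=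
  ((IndepFun_iff_Indep X Z μ).1 hXZ).setIntegral_eq_mul hX.comap_le hZ ⟨A, hA, rfl⟩ hf

end ProbabilityTheory

lemma setIntegral_div_measureReal_mul_div {Ω : Type*} {mΩ : MeasurableSpace Ω} {μ : Measure Ω}
    [IsFiniteMeasure μ] (f : Ω → ℝ) (S : Set Ω) (c : ℝ) :
    (∫ ω in S, f ω ∂μ) / μ.real S * (μ.real S / c) = (∫ ω in S, f ω ∂μ) / c := by
  rw [← mul_div_assoc,
    div_mul_cancel_of_imp fun h => setIntegral_measure_zero f ((measureReal_eq_zero_iff).1 h)]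

section Observed

variable {Ω : Type*} (D : Ω → ℝ) (M : Fin 2 → Ω → ℝ) (Y : Fin 2 → Fin 2 → Ω → ℝ)
  (d : Fin 2)

lemma setOf_observed_mediator_eq_one :
    {ω | D ω * M 1 ω + (1 - D ω) * M 0 ω = 1 ∧ D ω = ((d : ℕ) : ℝ)}
      = {ω | D ω = ((d : ℕ) : ℝ)} ∩ {ω | M d ω = 1} := by
  ext ω
  rw [Set.mem_inter_iff, and_comm]
  exact and_congr_left fun (hD : D ω = _) => by
    rw [Set.mem_ofPred_eq, add_comm, mix_eq_of_eq_fin hD (M · ω)]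

lemma indicator_observed_outcome (hMb : ∀ ω, M d ω = 0 ∨ M d ω = 1) :
    {ω | D ω * M 1 ω + (1 - D ω) * M 0 ω = 1 ∧ D ω = ((d : ℕ) : ℝ)}.indicator
        (fun ω => (1 - D ω) * ((1 - M 0 ω) * Y 0 0 ω + M 0 ω * Y 0 1 ω)
          + D ω * ((1 - M 1 ω) * Y 1 0 ω + M 1 ω * Y 1 1 ω))
      = {ω | D ω = ((d : ℕ) : ℝ)}.indicator (fun ω => M d ω * Y d 1 ω) := by
  rw [setOf_observed_mediator_eq_one, ← Set.indicator_indicator]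
  refine Set.indicator_congr fun ω (hD : D ω = _) => ?_
  have hY := mix_eq_of_eq_fin hD (fun e => (1 - M e ω) * Y e 0 ω + M e ω * Y e 1 ω)
  rcases hMb ω with hM | hM
  · simp [hM]
  · simp [hM, hY]

end Observed

theorem stmt15_general {Ω : Type*} [MeasurableSpace Ω] (μ : Measure Ω) [IsProbabilityMeasure μ]
    (D : Ω → ℝ) (M : Fin 2 → Ω → ℝ) (Y : Fin 2 → Fin 2 → Ω → ℝ)
    (hDm : Measurable D) (hMm : ∀ d, Measurable (M d)) (hYm : ∀ d m, Measurable (Y d m))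
    (hMb : ∀ d ω, M d ω = 0 ∨ M d ω = 1)
    (hignore : ∀ d : Fin 2, IndepFun D (fun ω => (M d ω, Y d 1 ω)) μ)
    (hmand : ∀ d : Fin 2, ∀ᵐ ω ∂μ, Y d 0 ω = 0)
    (hDpos : ∀ d : Fin 2, 0 < (μ {ω | D ω = ((d : ℕ) : ℝ)}).toReal) :
    ∀ d : Fin 2,
      ∫ ω, ((1 - M d ω) * Y d 0 ω + M d ω * Y d 1 ω) ∂μ
      = ((∫ ω in {ω | D ω * M 1 ω + (1 - D ω) * M 0 ω = 1 ∧ D ω = ((d : ℕ) : ℝ)},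
            ((1 - D ω) * ((1 - M 0 ω) * Y 0 0 ω + M 0 ω * Y 0 1 ω)
              + D ω * ((1 - M 1 ω) * Y 1 0 ω + M 1 ω * Y 1 1 ω)) ∂μ)
          / (μ {ω | D ω * M 1 ω + (1 - D ω) * M 0 ω = 1
              ∧ D ω = ((d : ℕ) : ℝ)}).toReal)
        * ((μ {ω | D ω * M 1 ω + (1 - D ω) * M 0 ω = 1
              ∧ D ω = ((d : ℕ) : ℝ)}).toReal
            / (μ {ω | D ω = ((d : ℕ) : ℝ)}).toReal) := by
  intro d
  have hT : MeasurableSet {ω | D ω = ((d : ℕ) : ℝ)} := hDm (measurableSet_singleton _)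
  have hS : MeasurableSet
      {ω | D ω * M 1 ω + (1 - D ω) * M 0 ω = 1 ∧ D ω = ((d : ℕ) : ℝ)} := by
    rw [setOf_observed_mediator_eq_one]
    exact hT.inter (hMm d (measurableSet_singleton 1))
  have hignorable : ∫ ω in {ω | D ω = ((d : ℕ) : ℝ)}, M d ω * Y d 1 ω ∂μ
      = μ.real {ω | D ω = ((d : ℕ) : ℝ)} * ∫ ω, M d ω * Y d 1 ω ∂μ :=
    (hignore d).setIntegral_preimage_eq_mul (f := fun p : ℝ × ℝ => p.1 * p.2) hDm
      ((hMm d).prodMk (hYm d 1)).aemeasurable (by fun_prop) (measurableSet_singleton _)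
  have hpotential : ∫ ω, ((1 - M d ω) * Y d 0 ω + M d ω * Y d 1 ω) ∂μ
      = ∫ ω, M d ω * Y d 1 ω ∂μ := by
    refine integral_congr_ae ?_
    filter_upwards [hmand d] with ω h0
    simp [h0]
  simp only [← measureReal_def] at hDpos ⊢
  rw [setIntegral_div_measureReal_mul_div, ← integral_indicator hS,
    indicator_observed_outcome D M Y d (hMb d), integral_indicator hT, hignorable, hpotential,
    mul_div_cancel_left₀ _ (hDpos d).ne']

/-- Under treatment ignorability D ⟂ (M(d), Y(d,1)) for each d,
mandatory reporting Y(d,0)=0 a.s., and consistency (M = M(D), Y = Y(D,M) written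
as mixtures), the identification formula
E[Y(d)] = E[Y | M=1, D=d] · P(M=1 | D=d) holds for d = 0,1,
provided P(M=1, D=d) > 0 (and P(D=d) > 0). -/
theorem stmt15 {Ω : Type*} [MeasurableSpace Ω] (μ : Measure Ω) [IsProbabilityMeasure μ]
    (D : Ω → ℝ) (M : Fin 2 → Ω → ℝ) (Y : Fin 2 → Fin 2 → Ω → ℝ)
    (hDm : Measurable D) (hMm : ∀ d, Measurable (M d)) (hYm : ∀ d m, Measurable (Y d m))
    (hDb : ∀ ω, D ω = 0 ∨ D ω = 1)
    (hMb : ∀ d ω, M d ω = 0 ∨ M d ω = 1)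
    (hYb : ∀ d m ω, Y d m ω = 0 ∨ Y d m ω = 1)
    (hignore : ∀ d : Fin 2, IndepFun D (fun ω => (M d ω, Y d 1 ω)) μ)
    (hmand : ∀ d : Fin 2, ∀ᵐ ω ∂μ, Y d 0 ω = 0)
    (hDpos : ∀ d : Fin 2, 0 < (μ {ω | D ω = ((d : ℕ) : ℝ)}).toReal)
    (hpos : ∀ d : Fin 2, 0 < (μ {ω | D ω * M 1 ω + (1 - D ω) * M 0 ω = 1
        ∧ D ω = ((d : ℕ) : ℝ)}).toReal) :
    ∀ d : Fin 2,
      ∫ ω, ((1 - M d ω) * Y d 0 ω + M d ω * Y d 1 ω) ∂μ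
      = ((∫ ω in {ω | D ω * M 1 ω + (1 - D ω) * M 0 ω = 1 ∧ D ω = ((d : ℕ) : ℝ)},
            ((1 - D ω) * ((1 - M 0 ω) * Y 0 0 ω + M 0 ω * Y 0 1 ω)
              + D ω * ((1 - M 1 ω) * Y 1 0 ω + M 1 ω * Y 1 1 ω)) ∂μ)
          / (μ {ω | D ω * M 1 ω + (1 - D ω) * M 0 ω = 1
              ∧ D ω = ((d : ℕ) : ℝ)}).toReal)
        * ((μ {ω | D ω * M 1 ω + (1 - D ω) * M 0 ω = 1
              ∧ D ω = ((d : ℕ) : ℝ)}).toReal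
            / (μ {ω | D ω = ((d : ℕ) : ℝ)}).toReal) :=
  stmt15_general μ D M Y hDm hMm hYm hMb hignore hmand hDpos
end

section
/- If E[M(1)] ≥ E[M(0)] (stochastic mediator monotonicity) and D is independent of (M(0),M(1)), then the bias factor [P(D=1|M=1)/P(D=0|M=1)] / [P(D=1)/P(D=0)] is at least 1, so the naive risk ratio is a lower bound for the causal risk ratio whenever the causal risk ratio equals the naive risk ratio times the bias factor. -/
/-! Under independence, `P(D = d, M = 1) = P(D = d) · P(M(d) = 1)`, so the bias factor
collapses to `P(M(1) = 1) / P(M(0) = 1) = E[M(1)] / E[M(0)]`, which is at least `1` by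
monotonicity. -/

open MeasureTheory ProbabilityTheory

theorem one_le_bias_factor {p₁ p₀ q₁ q₀ m : ℝ} (hp₁ : p₁ ≠ 0) (hp₀ : p₀ ≠ 0) (hm : m ≠ 0)
    (hq₀ : 0 < q₀) (hq : q₀ ≤ q₁) : 1 ≤ p₁ * q₁ / m / (p₀ * q₀ / m) / (p₁ / p₀) := by
  field_simp
  exact hq

section

variable {Ω : Type*}

theorem setOf_eq_one_and_mix_eq (D X Y : Ω → ℝ) (c : ℝ) :
    {ω | D ω = 1 ∧ D ω * Y ω + (1 - D ω) * X ω = c} = D ⁻¹' {1} ∩ Y ⁻¹' {c} :=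
  Set.ext fun _ => and_congr_right fun h => by simp [h]

theorem setOf_eq_zero_and_mix_eq (D X Y : Ω → ℝ) (c : ℝ) :
    {ω | D ω = 0 ∧ D ω * Y ω + (1 - D ω) * X ω = c} = D ⁻¹' {0} ∩ X ⁻¹' {c} :=
  Set.ext fun _ => and_congr_right fun h => by simp [h]

variable [MeasurableSpace Ω] {μ : Measure Ω}

theorem integral_eq_measureReal_of_forall_eq_zero_or_one {f : Ω → ℝ} (hf : Measurable f)
    (h01 : ∀ ω, f ω = 0 ∨ f ω = 1) : ∫ ω, f ω ∂μ = μ.real {ω | f ω = 1} := by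
  have hf_eq : ∀ ω, f ω = {ω | f ω = 1}.indicator 1 ω := fun ω => by
    rcases h01 ω with h | h <;> simp [h]
  exact (integral_congr_ae (.of_forall hf_eq)).trans
    (integral_indicator_one (hf (measurableSet_singleton 1)))

variable {D X Y : Ω → ℝ}

theorem ProbabilityTheory.IndepFun.measure_eq_one_and_mix_eq
    (h : IndepFun D (fun ω => (X ω, Y ω)) μ) (c : ℝ) :
    μ {ω | D ω = 1 ∧ D ω * Y ω + (1 - D ω) * X ω = c} = μ {ω | D ω = 1} * μ {ω | Y ω = c} := by
  rw [setOf_eq_one_and_mix_eq]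
  exact (h.comp measurable_id measurable_snd).measure_inter_preimage_eq_mul _ _
    (measurableSet_singleton 1) (measurableSet_singleton c)

theorem ProbabilityTheory.IndepFun.measure_eq_zero_and_mix_eq
    (h : IndepFun D (fun ω => (X ω, Y ω)) μ) (c : ℝ) :
    μ {ω | D ω = 0 ∧ D ω * Y ω + (1 - D ω) * X ω = c} = μ {ω | D ω = 0} * μ {ω | X ω = c} := by
  rw [setOf_eq_zero_and_mix_eq]
  exact (h.comp measurable_id measurable_fst).measure_inter_preimage_eq_mul _ _
    (measurableSet_singleton 0) (measurableSet_singleton c)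

end

theorem stmt17_general {Ω : Type*} [MeasurableSpace Ω] (μ : Measure Ω)
    (D : Ω → ℝ) (M : Fin 2 → Ω → ℝ)
    (hMm : ∀ d, Measurable (M d))
    (hMb : ∀ d ω, M d ω = 0 ∨ M d ω = 1)
    (hindep : IndepFun D (fun ω => (M 0 ω, M 1 ω)) μ)
    (hmono : (∫ ω, M 0 ω ∂μ) ≤ ∫ ω, M 1 ω ∂μ)
    (hD1 : 0 < (μ {ω | D ω = 1}).toReal)
    (hM1 : 0 < (μ {ω | D ω * M 1 ω + (1 - D ω) * M 0 ω = 1}).toReal)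
    (hD0M1 : 0 < (μ {ω | D ω = 0 ∧ D ω * M 1 ω + (1 - D ω) * M 0 ω = 1}).toReal) :
    1 ≤ (((μ {ω | D ω = 1 ∧ D ω * M 1 ω + (1 - D ω) * M 0 ω = 1}).toReal
            / (μ {ω | D ω * M 1 ω + (1 - D ω) * M 0 ω = 1}).toReal)
          / ((μ {ω | D ω = 0 ∧ D ω * M 1 ω + (1 - D ω) * M 0 ω = 1}).toReal
            / (μ {ω | D ω * M 1 ω + (1 - D ω) * M 0 ω = 1}).toReal))
        / ((μ {ω | D ω = 1}).toReal / (μ {ω | D ω = 0}).toReal)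
    ∧ ∀ naive crr : ℝ, 0 ≤ naive →
        crr = naive * ((((μ {ω | D ω = 1 ∧ D ω * M 1 ω + (1 - D ω) * M 0 ω = 1}).toReal
            / (μ {ω | D ω * M 1 ω + (1 - D ω) * M 0 ω = 1}).toReal)
          / ((μ {ω | D ω = 0 ∧ D ω * M 1 ω + (1 - D ω) * M 0 ω = 1}).toReal
            / (μ {ω | D ω * M 1 ω + (1 - D ω) * M 0 ω = 1}).toReal))
        / ((μ {ω | D ω = 1}).toReal / (μ {ω | D ω = 0}).toReal)) →
        naive ≤ crr := by
  rw [hindep.measure_eq_zero_and_mix_eq, ENNReal.toReal_mul] at hD0M1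
  rw [hindep.measure_eq_one_and_mix_eq, hindep.measure_eq_zero_and_mix_eq, ENNReal.toReal_mul,
    ENNReal.toReal_mul]
  have hq0 : 0 < (μ {ω | M 0 ω = 1}).toReal := pos_of_mul_pos_right hD0M1 ENNReal.toReal_nonneg
  have hp0 : 0 < (μ {ω | D ω = 0}).toReal := pos_of_mul_pos_left hD0M1 ENNReal.toReal_nonneg
  have hq : (μ {ω | M 0 ω = 1}).toReal ≤ (μ {ω | M 1 ω = 1}).toReal := by
    rwa [integral_eq_measureReal_of_forall_eq_zero_or_one (hMm 0) (hMb 0),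
      integral_eq_measureReal_of_forall_eq_zero_or_one (hMm 1) (hMb 1)] at hmono
  have hbias := one_le_bias_factor hD1.ne' hp0.ne' hM1.ne' hq0 hq
  exact ⟨hbias, fun naive crr hnaive hcrr => hcrr ▸ le_mul_of_one_le_right hnaive hbias⟩

/-- If E[M(1)] ≥ E[M(0)] (stochastic mediator monotonicity) and D is
independent of (M(0),M(1)), then the bias factor
[P(D=1|M=1)/P(D=0|M=1)] / [P(D=1)/P(D=0)] is at least 1 (here M = D·M(1)+(1−D)·M(0)),
and consequently the naive risk ratio is a lower bound for the causal risk ratio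
whenever the causal risk ratio equals the naive risk ratio times the bias factor. -/
theorem stmt17 {Ω : Type*} [MeasurableSpace Ω] (μ : Measure Ω) [IsProbabilityMeasure μ]
    (D : Ω → ℝ) (M : Fin 2 → Ω → ℝ)
    (hDm : Measurable D) (hMm : ∀ d, Measurable (M d))
    (hDb : ∀ ω, D ω = 0 ∨ D ω = 1)
    (hMb : ∀ d ω, M d ω = 0 ∨ M d ω = 1)
    (hindep : IndepFun D (fun ω => (M 0 ω, M 1 ω)) μ)
    (hmono : (∫ ω, M 0 ω ∂μ) ≤ ∫ ω, M 1 ω ∂μ)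
    (hD1 : 0 < (μ {ω | D ω = 1}).toReal)
    (hD0 : 0 < (μ {ω | D ω = 0}).toReal)
    (hM1 : 0 < (μ {ω | D ω * M 1 ω + (1 - D ω) * M 0 ω = 1}).toReal)
    (hD0M1 : 0 < (μ {ω | D ω = 0 ∧ D ω * M 1 ω + (1 - D ω) * M 0 ω = 1}).toReal) :
    1 ≤ (((μ {ω | D ω = 1 ∧ D ω * M 1 ω + (1 - D ω) * M 0 ω = 1}).toReal
            / (μ {ω | D ω * M 1 ω + (1 - D ω) * M 0 ω = 1}).toReal)
          / ((μ {ω | D ω = 0 ∧ D ω * M 1 ω + (1 - D ω) * M 0 ω = 1}).toReal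
            / (μ {ω | D ω * M 1 ω + (1 - D ω) * M 0 ω = 1}).toReal))
        / ((μ {ω | D ω = 1}).toReal / (μ {ω | D ω = 0}).toReal)
    ∧ ∀ naive crr : ℝ, 0 ≤ naive →
        crr = naive * ((((μ {ω | D ω = 1 ∧ D ω * M 1 ω + (1 - D ω) * M 0 ω = 1}).toReal
            / (μ {ω | D ω * M 1 ω + (1 - D ω) * M 0 ω = 1}).toReal)
          / ((μ {ω | D ω = 0 ∧ D ω * M 1 ω + (1 - D ω) * M 0 ω = 1}).toReal
            / (μ {ω | D ω * M 1 ω + (1 - D ω) * M 0 ω = 1}).toReal))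
        / ((μ {ω | D ω = 1}).toReal / (μ {ω | D ω = 0}).toReal)) →
        naive ≤ crr :=
  stmt17_general μ D M hMm hMb hindep hmono hD1 hM1 hD0M1
end

section
/- The iterated expectation decomposition ATE = ATE_{M=1}·P(M=1) + E[Y(1)−Y(0) | M=0]·P(M=0) holds, and there exist distributions satisfying mandatory reporting Y(d,0)=0 a.s. in which E[Y(1)−Y(0) | M=0] ≠ 0; hence conditioning on M=0 is not equivalent to intervening to set M=0. -/
/-!
The decomposition is the law of total expectation over the partition {M = 1}, {M = 0}.

For the counterexample let a fair coin decide D, let the mediator follow the treatment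
(M(d) = d) and set Y(d, m) = d·m. Mandatory reporting holds, yet Y(1) − Y(0) = 1 everywhere: on
{M = 0} = {D = 0} the counterfactual mediator M(1) equals 1, so conditioning on M = 0 does not switch
the mediator off the way the intervention Y(d, 0) does.
-/

open MeasureTheory ProbabilityTheory

section TotalExpectation

variable {Ω : Type*} [MeasurableSpace Ω] {μ : Measure Ω} [IsFiniteMeasure μ]

lemma setIntegral_div_measureReal_mul_measureReal (f : Ω → ℝ) (s : Set Ω) :
    (∫ x in s, f x ∂μ) / μ.real s * μ.real s = ∫ x in s, f x ∂μ := by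
  rw [div_eq_inv_mul, ← smul_eq_mul (μ.real s)⁻¹, ← setAverage_eq, mul_comm, ← smul_eq_mul,
    measure_smul_setAverage f (measure_ne_top μ s)]

theorem integral_eq_setIntegral_div_mul_add_compl {f : Ω → ℝ} (hf : Integrable f μ)
    {s : Set Ω} (hs : MeasurableSet s) :
    ∫ x, f x ∂μ = (∫ x in s, f x ∂μ) / μ.real s * μ.real s
      + (∫ x in sᶜ, f x ∂μ) / μ.real sᶜ * μ.real sᶜ := by
  rw [setIntegral_div_measureReal_mul_measureReal, setIntegral_div_measureReal_mul_measureReal,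
    integral_add_compl hs hf]

end TotalExpectation

section MediatorModel

variable {Ω : Type*}

def observedMediator (D : Ω → ℝ) (M : Fin 2 → Ω → ℝ) (ω : Ω) : ℝ :=
  D ω * M 1 ω + (1 - D ω) * M 0 ω

/-- The potential outcome `Y(d) = Y(d, M(d))`, written linearly in the binary `M(d)`. -/
def potentialOutcome (M : Fin 2 → Ω → ℝ) (Y : Fin 2 → Fin 2 → Ω → ℝ) (d : Fin 2) (ω : Ω) : ℝ :=
  (1 - M d ω) * Y d 0 ω + M d ω * Y d 1 ω

variable {D : Ω → ℝ} {M : Fin 2 → Ω → ℝ} {Y : Fin 2 → Fin 2 → Ω → ℝ}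

lemma observedMediator_eq_zero_or_eq_one (hD : ∀ ω, D ω = 0 ∨ D ω = 1)
    (hM : ∀ d ω, M d ω = 0 ∨ M d ω = 1) (ω : Ω) :
    observedMediator D M ω = 0 ∨ observedMediator D M ω = 1 := by
  rcases hD ω with h | h <;> simpa [observedMediator, h] using hM _ ω

lemma setOf_observedMediator_eq_zero (hD : ∀ ω, D ω = 0 ∨ D ω = 1)
    (hM : ∀ d ω, M d ω = 0 ∨ M d ω = 1) :
    {ω | observedMediator D M ω = 0} = {ω | observedMediator D M ω = 1}ᶜ := by
  ext ω
  rcases observedMediator_eq_zero_or_eq_one hD hM ω with h | h <;> simp [h]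

lemma potentialOutcome_eq_zero_or_eq_one (hM : ∀ d ω, M d ω = 0 ∨ M d ω = 1)
    (hY : ∀ d m ω, Y d m ω = 0 ∨ Y d m ω = 1) (d : Fin 2) (ω : Ω) :
    potentialOutcome M Y d ω = 0 ∨ potentialOutcome M Y d ω = 1 := by
  rcases hM d ω with h | h <;> simpa [potentialOutcome, h] using hY d _ ω

variable [MeasurableSpace Ω]

lemma measurable_observedMediator (hD : Measurable D) (hM : ∀ d, Measurable (M d)) :
    Measurable (observedMediator D M) := by
  have := hM 0; have := hM 1
  unfold observedMediator; fun_prop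

lemma integrable_potentialOutcome {μ : Measure Ω} [IsFiniteMeasure μ]
    (hMm : ∀ d, Measurable (M d)) (hYm : ∀ d m, Measurable (Y d m))
    (hM : ∀ d ω, M d ω = 0 ∨ M d ω = 1) (hY : ∀ d m ω, Y d m ω = 0 ∨ Y d m ω = 1) (d : Fin 2) :
    Integrable (potentialOutcome M Y d) μ := by
  have := hMm d; have := hYm d 0; have := hYm d 1
  refine ⟨(by unfold potentialOutcome; fun_prop : Measurable _).aestronglyMeasurable,
    HasFiniteIntegral.of_bounded (C := 1) (ae_of_all μ fun ω => ?_)⟩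
  rcases potentialOutcome_eq_zero_or_eq_one hM hY d ω with h | h <;> simp [h]

end MediatorModel

section Counterexample

noncomputable def fairCoin : Measure (Fin 7 → Fin 2) :=
  (2⁻¹ : ENNReal) • (Measure.dirac (fun _ => 0) + Measure.dirac (fun _ => 1))

instance : IsProbabilityMeasure fairCoin := by
  constructor
  simp [fairCoin, ENNReal.inv_two_add_inv_two]

lemma natCast_val_eq_zero_or_eq_one (i : Fin 2) : ((i : ℕ) : ℝ) = 0 ∨ ((i : ℕ) : ℝ) = 1 := by
  fin_cases i <;> simp

def coin (ω : Fin 7 → Fin 2) : ℝ := (ω 0 : ℕ)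

def followTreatment (d : Fin 2) (_ : Fin 7 → Fin 2) : ℝ := (d : ℕ)

def productOutcome (d m : Fin 2) (_ : Fin 7 → Fin 2) : ℝ := (d : ℕ) * (m : ℕ)

lemma productOutcome_eq_zero_or_eq_one (d m : Fin 2) (ω : Fin 7 → Fin 2) :
    productOutcome d m ω = 0 ∨ productOutcome d m ω = 1 := by
  fin_cases d <;> fin_cases m <;> simp [productOutcome]

lemma observedMediator_coin_followTreatment : observedMediator coin followTreatment = coin := by
  ext ω
  simp [observedMediator, followTreatment]

lemma potentialOutcome_followTreatment_productOutcome (d : Fin 2) (ω : Fin 7 → Fin 2) :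
    potentialOutcome followTreatment productOutcome d ω = (d : ℕ) := by
  fin_cases d <;> simp [potentialOutcome, followTreatment, productOutcome]

lemma fairCoin_setOf_observedMediator_eq {i : ℝ} (hi : i = 0 ∨ i = 1) :
    fairCoin {ω | observedMediator coin followTreatment ω = i} = 2⁻¹ := by
  rcases hi with rfl | rfl <;> simp [observedMediator_coin_followTreatment, fairCoin, coin]

lemma toReal_fairCoin_setOf_observedMediator_eq_pos {i : ℝ} (hi : i = 0 ∨ i = 1) :
    0 < (fairCoin {ω | observedMediator coin followTreatment ω = i}).toReal := by
  simp [fairCoin_setOf_observedMediator_eq hi]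

lemma setIntegral_observedMediator_eq_zero_div_eq_one :
    (∫ ω in {ω | observedMediator coin followTreatment ω = 0},
        (potentialOutcome followTreatment productOutcome 1 ω
          - potentialOutcome followTreatment productOutcome 0 ω) ∂fairCoin)
      / (fairCoin {ω | observedMediator coin followTreatment ω = 0}).toReal = 1 := by
  simp [potentialOutcome_followTreatment_productOutcome, measureReal_def,
    fairCoin_setOf_observedMediator_eq (.inl rfl)]

end Counterexample

theorem stmt18_general {Ω : Type*} [MeasurableSpace Ω] (μ : Measure Ω) [IsProbabilityMeasure μ]
    (D : Ω → ℝ) (M : Fin 2 → Ω → ℝ) (Y : Fin 2 → Fin 2 → Ω → ℝ)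
    (hDm : Measurable D) (hMm : ∀ d, Measurable (M d)) (hYm : ∀ d m, Measurable (Y d m))
    (hDb : ∀ ω, D ω = 0 ∨ D ω = 1)
    (hMb : ∀ d ω, M d ω = 0 ∨ M d ω = 1)
    (hYb : ∀ d m ω, Y d m ω = 0 ∨ Y d m ω = 1) :
    (∫ ω, (((1 - M 1 ω) * Y 1 0 ω + M 1 ω * Y 1 1 ω)
        - ((1 - M 0 ω) * Y 0 0 ω + M 0 ω * Y 0 1 ω)) ∂μ
      = ((∫ ω in {ω | D ω * M 1 ω + (1 - D ω) * M 0 ω = 1},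
            (((1 - M 1 ω) * Y 1 0 ω + M 1 ω * Y 1 1 ω)
              - ((1 - M 0 ω) * Y 0 0 ω + M 0 ω * Y 0 1 ω)) ∂μ)
          / (μ {ω | D ω * M 1 ω + (1 - D ω) * M 0 ω = 1}).toReal)
        * (μ {ω | D ω * M 1 ω + (1 - D ω) * M 0 ω = 1}).toReal
      + ((∫ ω in {ω | D ω * M 1 ω + (1 - D ω) * M 0 ω = 0},
            (((1 - M 1 ω) * Y 1 0 ω + M 1 ω * Y 1 1 ω)
              - ((1 - M 0 ω) * Y 0 0 ω + M 0 ω * Y 0 1 ω)) ∂μ)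
          / (μ {ω | D ω * M 1 ω + (1 - D ω) * M 0 ω = 0}).toReal)
        * (μ {ω | D ω * M 1 ω + (1 - D ω) * M 0 ω = 0}).toReal)
    ∧ ∃ (μ' : Measure (Fin 7 → Fin 2)) (_ : IsProbabilityMeasure μ')
        (D' : (Fin 7 → Fin 2) → ℝ) (M' : Fin 2 → (Fin 7 → Fin 2) → ℝ)
        (Y' : Fin 2 → Fin 2 → (Fin 7 → Fin 2) → ℝ),
      Measurable D' ∧ (∀ d, Measurable (M' d)) ∧ (∀ d m, Measurable (Y' d m))
      ∧ (∀ ω, D' ω = 0 ∨ D' ω = 1)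
      ∧ (∀ d ω, M' d ω = 0 ∨ M' d ω = 1)
      ∧ (∀ d m ω, Y' d m ω = 0 ∨ Y' d m ω = 1)
      ∧ (∀ d : Fin 2, ∀ᵐ ω ∂μ', Y' d 0 ω = 0)
      ∧ 0 < (μ' {ω | D' ω * M' 1 ω + (1 - D' ω) * M' 0 ω = 1}).toReal
      ∧ 0 < (μ' {ω | D' ω * M' 1 ω + (1 - D' ω) * M' 0 ω = 0}).toReal
      ∧ (∫ ω in {ω | D' ω * M' 1 ω + (1 - D' ω) * M' 0 ω = 0},
            (((1 - M' 1 ω) * Y' 1 0 ω + M' 1 ω * Y' 1 1 ω)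
              - ((1 - M' 0 ω) * Y' 0 0 ω + M' 0 ω * Y' 0 1 ω)) ∂μ')
          / (μ' {ω | D' ω * M' 1 ω + (1 - D' ω) * M' 0 ω = 0}).toReal ≠ 0 := by
  refine ⟨?_, fairCoin, inferInstance, coin, followTreatment, productOutcome,
    measurable_of_countable _, fun _ => measurable_of_countable _,
    fun _ _ => measurable_of_countable _, fun ω => natCast_val_eq_zero_or_eq_one (ω 0),
    fun d _ => natCast_val_eq_zero_or_eq_one d, productOutcome_eq_zero_or_eq_one,
    fun _ => ae_of_all _ fun _ => by simp [productOutcome],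
    toReal_fairCoin_setOf_observedMediator_eq_pos (.inr rfl),
    toReal_fairCoin_setOf_observedMediator_eq_pos (.inl rfl),
    setIntegral_observedMediator_eq_zero_div_eq_one.trans_ne one_ne_zero⟩
  have hM1 : MeasurableSet {ω | observedMediator D M ω = 1} :=
    measurable_observedMediator hDm hMm (measurableSet_singleton 1)
  have hATE := integral_eq_setIntegral_div_mul_add_compl
    ((integrable_potentialOutcome (μ := μ) hMm hYm hMb hYb 1).sub
      (integrable_potentialOutcome hMm hYm hMb hYb 0)) hM1
  rw [← setOf_observedMediator_eq_zero hDb hMb] at hATE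
  exact hATE

/-- The iterated-expectation decomposition
ATE = ATE_{M=1}·P(M=1) + E[Y(1)−Y(0) | M=0]·P(M=0) holds (with
M = D·M(1)+(1−D)·M(0), Y(d) = (1−M(d))·Y(d,0)+M(d)·Y(d,1), 0 < P(M=1) < 1);
moreover there exists a distribution satisfying mandatory reporting Y(d,0)=0 a.s.
in which E[Y(1)−Y(0) | M=0] ≠ 0, so conditioning on M=0 is not the same as
intervening to set M=0. -/
theorem stmt18 {Ω : Type*} [MeasurableSpace Ω] (μ : Measure Ω) [IsProbabilityMeasure μ]
    (D : Ω → ℝ) (M : Fin 2 → Ω → ℝ) (Y : Fin 2 → Fin 2 → Ω → ℝ)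
    (hDm : Measurable D) (hMm : ∀ d, Measurable (M d)) (hYm : ∀ d m, Measurable (Y d m))
    (hDb : ∀ ω, D ω = 0 ∨ D ω = 1)
    (hMb : ∀ d ω, M d ω = 0 ∨ M d ω = 1)
    (hYb : ∀ d m ω, Y d m ω = 0 ∨ Y d m ω = 1)
    (hpos1 : 0 < (μ {ω | D ω * M 1 ω + (1 - D ω) * M 0 ω = 1}).toReal)
    (hpos0 : 0 < (μ {ω | D ω * M 1 ω + (1 - D ω) * M 0 ω = 0}).toReal) :
    (∫ ω, (((1 - M 1 ω) * Y 1 0 ω + M 1 ω * Y 1 1 ω)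
        - ((1 - M 0 ω) * Y 0 0 ω + M 0 ω * Y 0 1 ω)) ∂μ
      = ((∫ ω in {ω | D ω * M 1 ω + (1 - D ω) * M 0 ω = 1},
            (((1 - M 1 ω) * Y 1 0 ω + M 1 ω * Y 1 1 ω)
              - ((1 - M 0 ω) * Y 0 0 ω + M 0 ω * Y 0 1 ω)) ∂μ)
          / (μ {ω | D ω * M 1 ω + (1 - D ω) * M 0 ω = 1}).toReal)
        * (μ {ω | D ω * M 1 ω + (1 - D ω) * M 0 ω = 1}).toReal
      + ((∫ ω in {ω | D ω * M 1 ω + (1 - D ω) * M 0 ω = 0},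
            (((1 - M 1 ω) * Y 1 0 ω + M 1 ω * Y 1 1 ω)
              - ((1 - M 0 ω) * Y 0 0 ω + M 0 ω * Y 0 1 ω)) ∂μ)
          / (μ {ω | D ω * M 1 ω + (1 - D ω) * M 0 ω = 0}).toReal)
        * (μ {ω | D ω * M 1 ω + (1 - D ω) * M 0 ω = 0}).toReal)
    ∧ ∃ (μ' : Measure (Fin 7 → Fin 2)) (_ : IsProbabilityMeasure μ')
        (D' : (Fin 7 → Fin 2) → ℝ) (M' : Fin 2 → (Fin 7 → Fin 2) → ℝ)
        (Y' : Fin 2 → Fin 2 → (Fin 7 → Fin 2) → ℝ),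
      Measurable D' ∧ (∀ d, Measurable (M' d)) ∧ (∀ d m, Measurable (Y' d m))
      ∧ (∀ ω, D' ω = 0 ∨ D' ω = 1)
      ∧ (∀ d ω, M' d ω = 0 ∨ M' d ω = 1)
      ∧ (∀ d m ω, Y' d m ω = 0 ∨ Y' d m ω = 1)
      ∧ (∀ d : Fin 2, ∀ᵐ ω ∂μ', Y' d 0 ω = 0)
      ∧ 0 < (μ' {ω | D' ω * M' 1 ω + (1 - D' ω) * M' 0 ω = 1}).toReal
      ∧ 0 < (μ' {ω | D' ω * M' 1 ω + (1 - D' ω) * M' 0 ω = 0}).toReal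
      ∧ (∫ ω in {ω | D' ω * M' 1 ω + (1 - D' ω) * M' 0 ω = 0},
            (((1 - M' 1 ω) * Y' 1 0 ω + M' 1 ω * Y' 1 1 ω)
              - ((1 - M' 0 ω) * Y' 0 0 ω + M' 0 ω * Y' 0 1 ω)) ∂μ')
          / (μ' {ω | D' ω * M' 1 ω + (1 - D' ω) * M' 0 ω = 0}).toReal ≠ 0 :=
  stmt18_general μ D M Y hDm hMm hYm hDb hMb hYb
end
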